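/- arXiv:math/0312366 — 8 statements merged into one kernel-verified Lean document; each statement's English description precedes it below -/
import Mathlib

section
/- Let $k = \mathbb{F}_q$ be a finite field of characteristic $2$ with $q$ elements. The number of tuples $(a,b,c,d,e,f) \in k^6$ satisfying $abc \neq 0$, $a+b+d \neq 0$, $b+c+e \neq 0$, $a+c+f \neq 0$ and $a+b+c+d+e+f \neq 1$ equals $q^6 - 7q^5 + 21q^4 - 35q^3 + 35q^2 - 21q + 7$. -/
open Finset

private noncomputable def Cnt (k : Type) [Field k] [Fintype k] (n : ℕ) (s : k) : ℕ :=
  Nat.card {w : Fin n → k // (∀ i, w i ≠ 0) ∧ ∑ i, w i = s}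

private lemma Cnt_succ (k : Type) [Field k] [Fintype k] [DecidableEq k] (n : ℕ) (s : k) :
    Cnt k (n + 1) s = ∑ x : {x : k // x ≠ 0}, Cnt k n (s - x.1) := by
  classical
  have e : {w : Fin (n+1) → k // (∀ i, w i ≠ 0) ∧ ∑ i, w i = s} ≃
      (x : {x : k // x ≠ 0}) × {w : Fin n → k // (∀ i, w i ≠ 0) ∧ ∑ i, w i = s - x.1} :=
    { toFun := fun w => ⟨⟨w.1 0, w.2.1 0⟩, ⟨Fin.tail w.1, fun i => w.2.1 i.succ, by
        have h := w.2.2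
        rw [Fin.sum_univ_succ] at h
        simp only [Fin.tail]
        exact eq_sub_of_add_eq' h⟩⟩
      invFun := fun p => ⟨Fin.cons p.1.1 p.2.1, by
        intro i
        refine Fin.cases ?_ ?_ i
        · simpa using p.1.2
        · intro j; simpa using p.2.2.1 j, by
        rw [Fin.sum_univ_succ]
        simp [p.2.2.2]⟩
      left_inv := by
        intro w
        apply Subtype.ext
        exact Fin.cons_self_tail w.1
      right_inv := by
        intro p
        refine Sigma.ext ?_ ?_
        · apply Subtype.ext; simp
        · apply heq_of_eq
          apply Subtype.ext
          funext i
          simp [Fin.tail] }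
  rw [Cnt, Nat.card_congr e, Nat.card_eq_fintype_card, Fintype.card_sigma]
  simp [Cnt, Nat.card_eq_fintype_card]

private lemma Cnt_formula (k : Type) [Field k] [Fintype k] [DecidableEq k] (n : ℕ) :
    ∀ s : k, (Cnt k n s : ℤ) * (Fintype.card k : ℤ) =
      ((Fintype.card k : ℤ) - 1) ^ n +
        (-1) ^ n * (if s = 0 then (Fintype.card k : ℤ) - 1 else -1) := by
  induction n with
  | zero =>
    intro s
    by_cases hs : s = 0
    · subst hs
      have : Cnt k 0 0 = 1 := by
        rw [Cnt]
        have : Unique {w : Fin 0 → k // (∀ i, w i ≠ 0) ∧ ∑ i, w i = 0} :=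
          { default := ⟨fun i => i.elim0, fun i => i.elim0, by simp⟩
            uniq := fun w => Subtype.ext (funext fun i => i.elim0) }
        exact Nat.card_unique
      rw [this]
      simp
    · have : Cnt k 0 s = 0 := by
        rw [Cnt]
        have : IsEmpty {w : Fin 0 → k // (∀ i, w i ≠ 0) ∧ ∑ i, w i = s} :=
          ⟨fun w => hs (by simpa using w.2.2.symm)⟩
        exact Nat.card_of_isEmpty
      rw [this]
      simp [hs]
  | succ n ih =>
    intro s
    rw [Cnt_succ]
    push_cast
    rw [Finset.sum_mul]
    have hstep : ∀ x : {x : k // x ≠ 0},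
        (Cnt k n (s - x.1) : ℤ) * (Fintype.card k : ℤ) =
          ((Fintype.card k : ℤ) - 1) ^ n +
            (-1) ^ n * (if x.1 = s then (Fintype.card k : ℤ) - 1 else -1) := by
      intro x
      rw [ih (s - x.1)]
      congr 2
      simp [sub_eq_zero, eq_comm]
    rw [Finset.sum_congr rfl (fun x _ => hstep x)]
    rw [Finset.sum_add_distrib, Finset.sum_const, ← Finset.mul_sum]
    have hcard : Fintype.card {x : k // x ≠ 0} = Fintype.card k - 1 := by
      have h1 := Fintype.card_subtype_compl (fun x : k => x = 0)
      simpa [Fintype.card_subtype_eq] using h1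
    have hq1 : 1 ≤ Fintype.card k := Fintype.card_pos
    have hcard' : ((Finset.univ : Finset {x : k // x ≠ 0}).card : ℤ) =
        (Fintype.card k : ℤ) - 1 := by
      rw [Finset.card_univ, hcard]; push_cast [Nat.cast_sub hq1]; ring
    by_cases hs : s = 0
    · subst hs
      have : ∀ x : {x : k // x ≠ 0},
          (if x.1 = (0:k) then (Fintype.card k : ℤ) - 1 else -1) = -1 := by
        intro x; simp [x.2]
      rw [Finset.sum_congr rfl (fun x _ => this x), Finset.sum_const]
      simp only [nsmul_eq_mul]
      rw [hcard']
      norm_num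
      ring
    · have hsplit : ∀ x : {x : k // x ≠ 0},
          (if x.1 = s then (Fintype.card k : ℤ) - 1 else -1) =
            -1 + (if x = (⟨s, hs⟩ : {x : k // x ≠ 0}) then (Fintype.card k : ℤ) else 0) := by
        intro x
        by_cases h : x.1 = s
        · rw [if_pos h, if_pos (Subtype.ext h)]; ring
        · rw [if_neg h, if_neg (fun hh => h (by rw [hh]))]; ring
      rw [Finset.sum_congr rfl (fun x _ => hsplit x), Finset.sum_add_distrib,
        Finset.sum_const, Finset.sum_ite_eq' Finset.univ (⟨s, hs⟩ : {x : k // x ≠ 0}),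
        if_pos (Finset.mem_univ _)]
      simp only [nsmul_eq_mul]
      rw [hcard']
      simp only [if_neg hs]
      ring

/-- Let `k = 𝔽_q` be a finite field of characteristic 2. The number of tuples
`(a,b,c,d,e,f) ∈ k⁶` with `abc ≠ 0`, `a+b+d ≠ 0`, `b+c+e ≠ 0`, `a+c+f ≠ 0` and
`a+b+c+d+e+f ≠ 1` equals `q⁶ - 7q⁵ + 21q⁴ - 35q³ + 35q² - 21q + 7`. -/
theorem stmt_1 (k : Type) [Field k] [Fintype k] [CharP k 2] (q : ℕ)
    (hq : Fintype.card k = q) :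
    (Nat.card {v : Fin 6 → k //
        v 0 * v 1 * v 2 ≠ 0 ∧
        v 0 + v 1 + v 3 ≠ 0 ∧
        v 1 + v 2 + v 4 ≠ 0 ∧
        v 0 + v 2 + v 5 ≠ 0 ∧
        v 0 + v 1 + v 2 + v 3 + v 4 + v 5 ≠ 1} : ℤ)
      = q ^ 6 - 7 * q ^ 5 + 21 * q ^ 4 - 35 * q ^ 3 + 35 * q ^ 2 - 21 * q + 7 := by
  classical
  subst hq
  have h2 : (2 : k) = 0 := by
    have := CharP.cast_eq_zero k 2
    simpa using this
  set q' : ℤ := (Fintype.card k : ℤ) with hq'def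
  let φ : (Fin 6 → k) → (Fin 6 → k) := fun v =>
    ![v 0, v 1, v 2, v 0 + v 1 + v 3, v 1 + v 2 + v 4, v 0 + v 2 + v 5]
  have hφφ : ∀ v, φ (φ v) = v := by
    intro v; funext i
    fin_cases i
    · simp [φ]
    · simp [φ]
    · simp [φ]
    · simp [φ]; linear_combination (v 0 + v 1) * h2
    · simp [φ]; linear_combination (v 1 + v 2) * h2
    · show v 0 + v 2 + (v 0 + v 2 + v 5) = v 5
      linear_combination (v 0 + v 2) * h2
  have hiff : ∀ v : Fin 6 → k,
      (v 0 * v 1 * v 2 ≠ 0 ∧ v 0 + v 1 + v 3 ≠ 0 ∧ v 1 + v 2 + v 4 ≠ 0 ∧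
        v 0 + v 2 + v 5 ≠ 0 ∧ v 0 + v 1 + v 2 + v 3 + v 4 + v 5 ≠ 1) ↔
      ((∀ i, φ v i ≠ 0) ∧ ∑ i, φ v i ≠ 1) := by
    intro v
    have hsum : ∑ i, φ v i = v 0 + v 1 + v 2 + v 3 + v 4 + v 5 := by
      rw [Fin.sum_univ_six]
      show v 0 + v 1 + v 2 + (v 0 + v 1 + v 3) + (v 1 + v 2 + v 4) + (v 0 + v 2 + v 5) =
        v 0 + v 1 + v 2 + v 3 + v 4 + v 5
      linear_combination (v 0 + v 1 + v 2) * h2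
    have hall : (∀ i, φ v i ≠ 0) ↔ (v 0 ≠ 0 ∧ v 1 ≠ 0 ∧ v 2 ≠ 0 ∧
        v 0 + v 1 + v 3 ≠ 0 ∧ v 1 + v 2 + v 4 ≠ 0 ∧ v 0 + v 2 + v 5 ≠ 0) := by
      constructor
      · intro h
        exact ⟨by simpa [φ] using h 0, by simpa [φ] using h 1, by simpa [φ] using h 2,
          by simpa [φ] using h 3, by simpa [φ] using h 4, by simpa [φ] using h 5⟩
      · rintro ⟨h0, h1, hc2, h3, h4, h5⟩ i
        fin_cases i
        · simpa [φ] using h0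
        · simpa [φ] using h1
        · simpa [φ] using hc2
        · simpa [φ] using h3
        · simpa [φ] using h4
        · simpa [φ] using h5
    rw [hall, hsum, mul_ne_zero_iff, mul_ne_zero_iff]
    tauto
  have hSA : Nat.card {v : Fin 6 → k //
        v 0 * v 1 * v 2 ≠ 0 ∧
        v 0 + v 1 + v 3 ≠ 0 ∧
        v 1 + v 2 + v 4 ≠ 0 ∧
        v 0 + v 2 + v 5 ≠ 0 ∧
        v 0 + v 1 + v 2 + v 3 + v 4 + v 5 ≠ 1} =
      Nat.card {w : Fin 6 → k // (∀ i, w i ≠ 0) ∧ ∑ i, w i ≠ 1} :=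
    Nat.card_congr (Equiv.subtypeEquiv ⟨φ, φ, hφφ, hφφ⟩ hiff)
  have hsplit : Nat.card {w : Fin 6 → k // (∀ i, w i ≠ 0) ∧ ∑ i, w i = 1} +
      Nat.card {w : Fin 6 → k // (∀ i, w i ≠ 0) ∧ ∑ i, w i ≠ 1} =
      Nat.card {w : Fin 6 → k // ∀ i, w i ≠ 0} := by
    simp only [Nat.card_eq_fintype_card, Fintype.card_subtype]
    rw [← Finset.filter_filter, ← Finset.filter_filter]
    exact Finset.card_filter_add_card_filter_not _
  have hnz : Fintype.card {x : k // x ≠ 0} = Fintype.card k - 1 := by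
    have h1 := Fintype.card_subtype_compl (fun x : k => x = 0)
    simpa [Fintype.card_subtype_eq] using h1
  have hall6 : Nat.card {w : Fin 6 → k // ∀ i, w i ≠ 0} = (Fintype.card k - 1) ^ 6 := by
    rw [Nat.card_congr (Equiv.subtypePiEquivPi (p := fun (_ : Fin 6) (x : k) => x ≠ 0)),
      Nat.card_eq_fintype_card, Fintype.card_pi]
    simp [hnz]
  have hq1 : 1 ≤ Fintype.card k := Fintype.card_pos
  have hcast : ((Fintype.card k - 1 : ℕ) : ℤ) = q' - 1 := by
    push_cast [Nat.cast_sub hq1]; ring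
  have hC := Cnt_formula k 6 1
  rw [if_neg (one_ne_zero)] at hC
  have hsplit' : (Cnt k 6 1 : ℤ) + (Nat.card {w : Fin 6 → k //
      (∀ i, w i ≠ 0) ∧ ∑ i, w i ≠ 1} : ℤ) = (q' - 1) ^ 6 := by
    rw [← hcast]
    exact_mod_cast congrArg (Nat.cast : ℕ → ℤ) (hsplit.trans hall6)
  have hq'0 : q' ≠ 0 := by
    rw [hq'def]
    exact_mod_cast Fintype.card_ne_zero
  rw [hSA]
  apply mul_left_cancel₀ hq'0
  simp only [hq'def] at hsplit' ⊢
  linear_combination (Fintype.card k : ℤ) * hsplit' - hC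
end

section
/- Let $k = \mathbb{F}_q \subseteq K = \mathbb{F}_{q^2}$ be finite fields of characteristic $2$ and let $\mathrm{Tr}: K \to k$ be the trace map. The number of tuples $(a,c,d,e)$ with $a \in K^*$, $c \in k^*$, $d \in k$, $e \in K$ satisfying $d \neq \mathrm{Tr}(a)$, $a + c + e \neq 0$ and $c + d + \mathrm{Tr}(a) + \mathrm{Tr}(e) \neq 1$ equals $q^6 - 3q^5 + q^4 + 5q^3 - 5q^2 - q + 3$. -/
open Finset

/-- Let `k = 𝔽_q ⊆ K = 𝔽_{q²}` be finite fields of characteristic 2 with trace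
`Tr(x) = x + x^q`. The number of tuples `(a,c,d,e)` with `a ∈ K*`, `c ∈ k*`,
`d ∈ k`, `e ∈ K` satisfying `d ≠ Tr(a)`, `a+c+e ≠ 0` and
`c + d + Tr(a) + Tr(e) ≠ 1` equals `q⁶ - 3q⁵ + q⁴ + 5q³ - 5q² - q + 3`. -/
theorem stmt_3 (k K : Type) [Field k] [Fintype k] [CharP k 2]
    [Field K] [Fintype K] [Algebra k K] (q : ℕ)
    (hk : Fintype.card k = q) (hK : Fintype.card K = q ^ 2) :
    (Nat.card {v : K × k × k × K //
        v.1 ≠ 0 ∧ v.2.1 ≠ 0 ∧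
        algebraMap k K v.2.2.1 ≠ v.1 + v.1 ^ q ∧
        v.1 + algebraMap k K v.2.1 + v.2.2.2 ≠ 0 ∧
        algebraMap k K v.2.1 + algebraMap k K v.2.2.1 + (v.1 + v.1 ^ q)
          + (v.2.2.2 + v.2.2.2 ^ q) ≠ 1} : ℤ)
      = q ^ 6 - 3 * q ^ 5 + q ^ 4 + 5 * q ^ 3 - 5 * q ^ 2 - q + 3 := by
  classical
  haveI : CharP K 2 := charP_of_injective_algebraMap (algebraMap k K).injective 2
  haveI := Fact.mk Nat.prime_two
  obtain ⟨n, -, hq⟩ := FiniteField.card k 2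
  rw [hk] at hq
  have hq2 : 2 ≤ q := hk ▸ Fintype.one_lt_card
  have hq0 : 0 < q := by omega
  have hinj : Function.Injective (algebraMap k K) := (algebraMap k K).injective
  have frob : ∀ x y : K, (x + y) ^ q = x ^ q + y ^ q := by
    intro x y; rw [hq]; exact add_pow_char_pow x y 2 n
  have addself : ∀ x : K, x + x = 0 := fun x => CharTwo.add_self_eq_zero x
  have addselfk : ∀ x : k, x + x = 0 := fun x => CharTwo.add_self_eq_zero x
  have phifix : ∀ t : k, (algebraMap k K t) ^ q = algebraMap k K t := by
    intro t; rw [← map_pow, ← hk, FiniteField.pow_card]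
  have xq2 : ∀ x : K, (x ^ q) ^ q = x := by
    intro x; rw [← pow_mul, ← sq, ← hK, FiniteField.pow_card]
  have Tadd : ∀ x y : K, (x + y) + (x + y) ^ q = (x + x ^ q) + (y + y ^ q) := by
    intro x y; rw [frob]; ring
  have Tphi : ∀ t : k, (algebraMap k K t) + (algebraMap k K t) ^ q = 0 := by
    intro t; rw [phifix]; exact addself _
  have Tfix : ∀ x : K, ((x + x ^ q)) ^ q = x + x ^ q := by
    intro x; rw [frob, xq2]; ring
  -- the fixed subfield
  have cardIm : (univ.image (algebraMap k K)).card = q := by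
    rw [Finset.card_image_of_injective _ hinj, card_univ, hk]
  have cardFixle : (univ.filter (fun x : K => x ^ q = x)).card ≤ q := by
    set p : Polynomial K := Polynomial.X ^ q - Polynomial.X with hp
    have hpd : p.natDegree = q := by
      rw [hp, Polynomial.natDegree_sub_eq_left_of_natDegree_lt]
      · simp [Polynomial.natDegree_X_pow]
      · simp only [Polynomial.natDegree_X_pow, Polynomial.natDegree_X]
        omega
    have hp0 : p ≠ 0 := by
      intro h; rw [h] at hpd; simp at hpd; omega
    have sub : univ.filter (fun x : K => x ^ q = x) ⊆ p.roots.toFinset := by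
      intro x hx
      simp only [mem_filter] at hx
      rw [Multiset.mem_toFinset, Polynomial.mem_roots hp0]
      simp [Polynomial.IsRoot, hp, hx.2]
    calc (univ.filter (fun x : K => x ^ q = x)).card
        ≤ p.roots.toFinset.card := card_le_card sub
      _ ≤ Multiset.card p.roots := Multiset.toFinset_card_le _
      _ ≤ p.natDegree := p.card_roots'
      _ = q := hpd
  have FixSub : univ.image (algebraMap k K) ⊆ univ.filter (fun x : K => x ^ q = x) := by
    intro x hx
    simp only [mem_image] at hx
    obtain ⟨t, -, rfl⟩ := hx
    simp [mem_filter, phifix t]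
  have FixEq : univ.filter (fun x : K => x ^ q = x) = univ.image (algebraMap k K) :=
    (Finset.eq_of_subset_of_card_le FixSub (by rw [cardIm]; exact cardFixle)).symm
  have cardFix : (univ.filter (fun x : K => x ^ q = x)).card = q := by rw [FixEq, cardIm]
  have hrange : ∀ x : K, x ^ q = x → ∃ t : k, algebraMap k K t = x := by
    intro x hx
    have : x ∈ univ.image (algebraMap k K) := by rw [← FixEq]; simp [hx]
    simpa using this
  -- cancellation lemmas in characteristic two
  have addcancel : ∀ x y : K, x + y = 0 ↔ x = y := by
    intro x y
    constructor
    · intro h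
      have : x = -y := eq_neg_of_add_eq_zero_left h
      rwa [CharTwo.neg_eq] at this
    · rintro rfl; exact addself x
  have addcancelk : ∀ x y : k, x + y = 0 ↔ x = y := by
    intro x y
    constructor
    · intro h
      have : x = -y := eq_neg_of_add_eq_zero_left h
      rwa [CharTwo.neg_eq] at this
    · rintro rfl; exact addselfk x
  -- kernel of the trace
  have KerEq : (univ.filter fun x : K => x + x ^ q = 0) = univ.filter (fun x : K => x ^ q = x) := by
    ext x
    simp only [mem_filter, mem_univ, true_and]
    rw [addcancel x (x ^ q), eq_comm]
  have cardKer : (univ.filter fun x : K => x + x ^ q = 0).card = q := by rw [KerEq, cardFix]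
  -- fibers of the trace
  have fib_mem : ∀ e0 : K, (univ.filter fun x : K => x + x ^ q = e0 + e0 ^ q).card = q := by
    intro e0
    have hbij : (univ.filter fun x : K => x + x ^ q = e0 + e0 ^ q).card
        = (univ.filter fun x : K => x + x ^ q = 0).card := by
      apply Finset.card_bij' (fun x _ => x + e0) (fun x _ => x + e0)
      · intro a ha
        simp only [mem_filter, mem_univ, true_and] at ha ⊢
        rw [Tadd, ha, addself]
      · intro a ha
        simp only [mem_filter, mem_univ, true_and] at ha ⊢
        rw [Tadd, ha, zero_add]
      · intro a ha; rw [add_assoc, addself, add_zero]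
      · intro a ha; rw [add_assoc, addself, add_zero]
    rw [hbij, cardKer]
  have cardImT : (univ.image (fun x : K => x + x ^ q)).card = q := by
    have h1 : (univ : Finset K).card
        = ∑ y ∈ univ.image (fun x : K => x + x ^ q),
            (univ.filter fun x : K => x + x ^ q = y).card :=
      card_eq_sum_card_fiberwise (fun x _ => mem_image_of_mem _ (mem_univ x))
    have h2 : ∀ y ∈ univ.image (fun x : K => x + x ^ q),
        (univ.filter fun x : K => x + x ^ q = y).card = q := by
      intro y hy
      obtain ⟨e0, -, rfl⟩ := mem_image.mp hy
      exact fib_mem e0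
    rw [Finset.sum_congr rfl h2, Finset.sum_const, smul_eq_mul, card_univ, hK] at h1
    have := h1.symm
    rw [pow_two] at this
    exact Nat.eq_of_mul_eq_mul_right hq0 this
  have ImTsub : univ.image (fun x : K => x + x ^ q) ⊆ univ.filter (fun x : K => x ^ q = x) := by
    intro y hy; obtain ⟨x, -, rfl⟩ := mem_image.mp hy; simp [Tfix x]
  have ImTEq : univ.image (fun x : K => x + x ^ q) = univ.filter (fun x : K => x ^ q = x) :=
    Finset.eq_of_subset_of_card_le ImTsub (by rw [cardImT]; exact cardFixle)
  have fibcard : ∀ t : k,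
      (univ.filter fun x : K => x + x ^ q = algebraMap k K t).card = q := by
    intro t
    have : algebraMap k K t ∈ univ.image (fun x : K => x + x ^ q) := by
      rw [ImTEq]; simp [phifix t]
    obtain ⟨e0, -, heq⟩ := mem_image.mp this
    rw [← heq]
    exact fib_mem e0
  -- fiber minus zero
  have hfib0 : ∀ t : k,
      ((univ.filter fun a : K => a ≠ 0 ∧ a + a ^ q = algebraMap k K t).card : ℤ)
      = (q : ℤ) - (if t = 0 then 1 else 0) := by
    intro t
    have h1 : (univ.filter fun a : K => a ≠ 0 ∧ a + a ^ q = algebraMap k K t)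
        = (univ.filter fun a : K => a + a ^ q = algebraMap k K t).erase 0 := by
      ext x
      simp only [mem_filter, mem_erase, mem_univ, true_and]
      try tauto
    rw [h1]
    by_cases h0 : t = 0
    · subst h0
      have hmem : (0 : K) ∈ univ.filter fun a : K => a + a ^ q = algebraMap k K 0 := by
        simp [zero_pow hq0.ne']
      rw [card_erase_of_mem hmem, fibcard, if_pos rfl]
      omega
    · rw [Finset.erase_eq_of_notMem, fibcard, if_neg h0, sub_zero]
      simp only [mem_filter, mem_univ, true_and]
      rw [zero_pow hq0.ne', add_zero]
      intro hc
      exact h0 (hinj (by rw [← hc, map_zero])).symm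
  -- counting d avoiding two values
  have dcount : ∀ u v : k, (∑ d : k, if d ≠ u ∧ d ≠ v then (1:ℤ) else 0)
      = if u = v then (q:ℤ) - 1 else (q:ℤ) - 2 := by
    intro u v
    rw [Finset.sum_boole]
    have h1 : (univ.filter fun d : k => d ≠ u ∧ d ≠ v) = univ \ {u, v} := by
      ext d; simp [not_or]
    rw [h1, card_sdiff_of_subset (subset_univ _), card_univ, hk]
    by_cases huv : u = v
    · subst huv
      rw [if_pos rfl, Finset.pair_eq_singleton, Finset.card_singleton]
      omega
    · rw [if_neg huv, Finset.card_pair huv]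
      omega
  -- card of nonzero elements
  have cardk0 : (univ.filter fun c : k => c ≠ 0).card = q - 1 := by
    rw [Finset.filter_ne', card_erase_of_mem (mem_univ 0), card_univ, hk]
  have cardK0 : (univ.filter fun a : K => a ≠ 0).card = q ^ 2 - 1 := by
    rw [Finset.filter_ne', card_erase_of_mem (mem_univ 0), card_univ, hK]
  -- complement of a trace fiber
  have fibcompl : ∀ t : k,
      (univ.filter fun x : K => ¬(x + x ^ q = algebraMap k K t)).card = q ^ 2 - q := by
    intro t
    have h := Finset.card_filter_add_card_filter_not
      (s := (univ : Finset K)) (p := fun x : K => x + x ^ q = algebraMap k K t)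
    rw [fibcard, card_univ, hK] at h
    omega
  -- the inner double sum over (d, e) for fixed a ≠ 0, c ≠ 0
  have inner : ∀ (a : K) (c : k),
      (∑ e : K, ∑ d : k,
        if (algebraMap k K d ≠ a + a ^ q ∧ a + algebraMap k K c + e ≠ 0 ∧
            algebraMap k K c + algebraMap k K d + (a + a ^ q) + (e + e ^ q) ≠ 1)
          then (1:ℤ) else 0)
      = ((q:ℤ)^3 - 2*(q:ℤ)^2 + 2)
        - (if a + a ^ q = algebraMap k K (1 + c) then 1 else 0) := by
    intro a c
    obtain ⟨ta, hta⟩ := hrange _ (Tfix a)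
    have step_e : ∀ e : K,
        (∑ d : k,
          if (algebraMap k K d ≠ a + a ^ q ∧ a + algebraMap k K c + e ≠ 0 ∧
              algebraMap k K c + algebraMap k K d + (a + a ^ q) + (e + e ^ q) ≠ 1)
            then (1:ℤ) else 0)
        = if e ≠ a + algebraMap k K c then
            (if e + e ^ q = algebraMap k K (1 + c) then ((q:ℤ) - 1) else ((q:ℤ) - 2))
          else 0 := by
      intro e
      obtain ⟨te, hte⟩ := hrange _ (Tfix e)
      by_cases he : e = a + algebraMap k K c
      · rw [if_neg (by simpa using he)]
        apply Finset.sum_eq_zero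
        intro d _
        rw [if_neg]
        intro hcond
        exact hcond.2.1 (by rw [he]; exact addself _)
      · rw [if_pos he]
        have hecond : a + algebraMap k K c + e ≠ 0 := by
          intro h0
          exact he ((addcancel _ _).1 h0).symm
        have hc1 : ∀ d : k, (algebraMap k K d ≠ a + a ^ q) ↔ d ≠ ta := by
          intro d; rw [← hta]; exact hinj.ne_iff
        have hc2 : ∀ d : k,
            (algebraMap k K c + algebraMap k K d + (a + a ^ q) + (e + e ^ q) ≠ 1)
            ↔ d ≠ 1 + c + ta + te := by
          intro d
          rw [← hta, ← hte, ← map_one (algebraMap k K), ← map_add, ← map_add, ← map_add,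
            hinj.ne_iff]
          have hr : c + d + ta + te = (c + ta + te) + d := by ring
          rw [hr]
          constructor
          · intro h hd
            apply h
            rw [hd]
            have : c + ta + te + (1 + c + ta + te) = (c + ta + te) + (c + ta + te) + 1 := by
              ring
            rw [this, addselfk, zero_add]
          · intro h h1
            apply h
            have : d = (c + ta + te) + ((c + ta + te) + d) := by
              rw [← add_assoc, addselfk, zero_add]
            rw [this, h1]
            ring
        have hiff : (ta = 1 + c + ta + te) ↔ (e + e ^ q = algebraMap k K (1 + c)) := by
          rw [← hte, hinj.eq_iff]
          have hr : 1 + c + ta + te = ta + (te + (1 + c)) := by ring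
          rw [hr]
          constructor
          · intro h
            have h2 : ta + 0 = ta + (te + (1 + c)) := by rw [add_zero]; exact h
            have h3 := add_left_cancel h2
            exact ((addcancelk te (1 + c)).1 h3.symm)
          · intro h
            rw [← h, addselfk, add_zero]
        calc (∑ d : k,
            if (algebraMap k K d ≠ a + a ^ q ∧ a + algebraMap k K c + e ≠ 0 ∧
                algebraMap k K c + algebraMap k K d + (a + a ^ q) + (e + e ^ q) ≠ 1)
              then (1:ℤ) else 0)
            = ∑ d : k, if (d ≠ ta ∧ d ≠ 1 + c + ta + te) then (1:ℤ) else 0 := by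
              apply Finset.sum_congr rfl
              intro d _
              refine if_congr ?_ rfl rfl
              rw [hc1 d, hc2 d]
              simp [hecond]
          _ = if ta = 1 + c + ta + te then (q:ℤ) - 1 else (q:ℤ) - 2 := dcount _ _
          _ = if e + e ^ q = algebraMap k K (1 + c) then ((q:ℤ) - 1) else ((q:ℤ) - 2) := by
              rw [if_congr hiff rfl rfl]
    rw [Finset.sum_congr rfl (fun e _ => step_e e)]
    rw [← Finset.sum_filter, Finset.filter_ne', Finset.sum_erase_eq_sub (mem_univ _)]
    have hTb : (a + algebraMap k K c) + (a + algebraMap k K c) ^ q = a + a ^ q := by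
      rw [Tadd, Tphi, add_zero]
    rw [hTb]
    rw [Finset.sum_ite (fun _ => ((q:ℤ) - 1)) (fun _ => ((q:ℤ) - 2)),
      Finset.sum_const, Finset.sum_const, fibcard, fibcompl]
    have hqq : q ≤ q ^ 2 := Nat.le_self_pow (by norm_num) q
    rw [nsmul_eq_mul, nsmul_eq_mul]
    push_cast [Nat.cast_sub hqq]
    split_ifs <;> ring
  -- now the main computation
  rw [Nat.card_eq_fintype_card, Fintype.card_subtype, Finset.card_filter]
  push_cast
  simp only [Fintype.sum_prod_type]
  have outer : ∀ (a : K) (c : k),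
      (∑ d : k, ∑ e : K,
        if (a ≠ 0 ∧ c ≠ 0 ∧ algebraMap k K d ≠ a + a ^ q ∧
            a + algebraMap k K c + e ≠ 0 ∧
            algebraMap k K c + algebraMap k K d + (a + a ^ q) + (e + e ^ q) ≠ 1)
          then (1:ℤ) else 0)
      = if a ≠ 0 ∧ c ≠ 0 then
          (((q:ℤ)^3 - 2*(q:ℤ)^2 + 2) - (if a + a ^ q = algebraMap k K (1 + c) then 1 else 0))
        else 0 := by
    intro a c
    by_cases hac : a ≠ 0 ∧ c ≠ 0
    · rw [if_pos hac, ← inner a c, Finset.sum_comm]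
      apply Finset.sum_congr rfl; intro d _
      apply Finset.sum_congr rfl; intro e _
      refine if_congr ?_ rfl rfl
      simp [hac.1, hac.2]
    · rw [if_neg hac]
      apply Finset.sum_eq_zero; intro d _
      apply Finset.sum_eq_zero; intro e _
      rw [if_neg]
      intro hcond
      exact hac ⟨hcond.1, hcond.2.1⟩
  rw [Finset.sum_congr rfl (fun a _ => Finset.sum_congr rfl (fun c _ => outer a c))]
  have hsplit : ∀ (p r : Prop) (ip : Decidable p) (ir : Decidable r) (B : ℤ),
      (if p then (B - (if r then (1:ℤ) else 0)) else 0)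
      = (if p then B else 0) - (if p ∧ r then 1 else 0) := by
    intro p r ip ir B
    by_cases hp : p <;> by_cases hr : r <;> simp [hp, hr]
  simp only [hsplit]
  simp only [Finset.sum_sub_distrib]
  have term1 : (∑ a : K, ∑ c : k, if a ≠ 0 ∧ c ≠ 0 then ((q:ℤ)^3 - 2*(q:ℤ)^2 + 2) else 0)
      = ((q:ℤ)^2 - 1) * (((q:ℤ) - 1) * ((q:ℤ)^3 - 2*(q:ℤ)^2 + 2)) := by
    have h1 : ∀ a : K, (∑ c : k, if a ≠ 0 ∧ c ≠ 0 then ((q:ℤ)^3 - 2*(q:ℤ)^2 + 2) else 0)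
        = if a ≠ 0 then ((q:ℤ) - 1) * ((q:ℤ)^3 - 2*(q:ℤ)^2 + 2) else 0 := by
      intro a
      by_cases ha : a ≠ 0
      · rw [if_pos ha]
        have hone : ∀ c : k, (a ≠ 0 ∧ c ≠ 0) ↔ (c ≠ 0) :=
          fun c => ⟨fun h => h.2, fun h => ⟨ha, h⟩⟩
        simp only [hone]
        rw [← Finset.sum_filter, Finset.sum_const, cardk0, nsmul_eq_mul,
          Nat.cast_sub (by omega : 1 ≤ q)]
        norm_num
      · rw [if_neg ha]
        apply Finset.sum_eq_zero; intro c _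
        rw [if_neg]; exact fun h => ha h.1
    rw [Finset.sum_congr rfl fun a _ => h1 a]
    rw [← Finset.sum_filter, Finset.sum_const, cardK0, nsmul_eq_mul,
      Nat.cast_sub (Nat.one_le_pow _ _ hq0)]
    push_cast; ring
  have term2 : (∑ a : K, ∑ c : k,
      if (a ≠ 0 ∧ c ≠ 0) ∧ a + a ^ q = algebraMap k K (1 + c) then (1:ℤ) else 0)
      = ((q:ℤ) - 1) * (q:ℤ) - 1 := by
    rw [Finset.sum_comm]
    have h1 : ∀ c : k, (∑ a : K,
        if (a ≠ 0 ∧ c ≠ 0) ∧ a + a ^ q = algebraMap k K (1 + c) then (1:ℤ) else 0)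
        = if c ≠ 0 then ((q:ℤ) - (if (1 + c : k) = 0 then (1:ℤ) else 0)) else 0 := by
      intro c
      by_cases hcc : c ≠ 0
      · rw [if_pos hcc]
        have hiff : ∀ a : K, ((a ≠ 0 ∧ c ≠ 0) ∧ a + a ^ q = algebraMap k K (1 + c))
            ↔ (a ≠ 0 ∧ a + a ^ q = algebraMap k K (1 + c)) := by
          intro a
          constructor
          · rintro ⟨⟨ha1, -⟩, h2⟩; exact ⟨ha1, h2⟩
          · rintro ⟨ha1, h2⟩; exact ⟨⟨ha1, hcc⟩, h2⟩
        simp only [hiff]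
        rw [Finset.sum_boole, hfib0 (1 + c)]
      · rw [if_neg hcc]
        apply Finset.sum_eq_zero; intro a _
        rw [if_neg]; exact fun h => hcc h.1.2
    rw [Finset.sum_congr rfl fun c _ => h1 c]
    simp only [hsplit]
    rw [Finset.sum_sub_distrib]
    have h2 : (∑ c : k, if c ≠ 0 then (q:ℤ) else 0) = ((q:ℤ) - 1) * q := by
      rw [← Finset.sum_filter, Finset.sum_const, cardk0, nsmul_eq_mul,
        Nat.cast_sub (by omega : 1 ≤ q)]
      push_cast; ring
    have h3 : (∑ c : k, if c ≠ 0 ∧ (1 + c : k) = 0 then (1:ℤ) else 0) = 1 := by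
      have hiff : ∀ c : k, (c ≠ 0 ∧ (1 + c : k) = 0) ↔ c = 1 := by
        intro c
        constructor
        · rintro ⟨-, h2'⟩
          exact ((addcancelk 1 c).1 h2').symm
        · rintro rfl
          exact ⟨one_ne_zero, addselfk 1⟩
      simp only [hiff]
      rw [Finset.sum_ite_eq' univ (1:k) (fun _ => (1:ℤ))]
      simp
    rw [h2, h3]
  rw [term1, term2]
  ring
end

section
/- Let $k = \mathbb{F}_q \subseteq K = \mathbb{F}_{q^3}$ be finite fields of characteristic $2$ and let $\mathrm{Tr}: K \to k$ be the trace map. The number of pairs $(a,d)$ with $a \in K^*$ and $d \in K$ satisfying $a + a^q + d \neq 0$ and $\mathrm{Tr}(a) + \mathrm{Tr}(d) \neq 1$ equals $q^6 - q^5 - 2q^3 + 2q^2 + 1$. -/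
/-!
`Tr` is additive, takes values in the fixed points of `x ↦ x ^ q`, and satisfies
`Tr (a ^ q) = Tr a`. Its kernel has at most `q²` elements (roots of `X + X ^ q + X ^ q²`) and its
image at most `q` (roots of `X ^ q - X`); as the two sizes multiply to `q³`, every fibre over a
fixed point has exactly `q²` elements. The substitution `s = a + d` turns the conditions into
`a ≠ 0`, `s ≠ -a ^ q`, `Tr s ≠ 1`, so the count is
`(q³ - 1)(q³ - q²) - #{a ≠ 0 | Tr a ≠ -1} = (q³ - 1)(q³ - q²) - (q³ - q² - 1)`.
-/

open Finset Polynomial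

theorem Polynomial.card_filter_eval_eq_zero_le {R : Type*} [CommRing R] [IsDomain R] [Fintype R]
    [DecidableEq R] {p : R[X]} (hp : p ≠ 0) : #{x | p.eval x = 0} ≤ p.natDegree :=
  card_le_degree_of_subset_roots fun x hx => by
    simpa [mem_roots hp] using (mem_filter.1 hx).2

theorem AddMonoidHom.card_image_mul_card_ker {G M : Type*} [AddGroup G] [Fintype G]
    [AddMonoid M] [DecidableEq M] (f : G →+ M) :
    #(univ.image f) * #{g | f g = 0} = Fintype.card G := by
  rw [← card_univ, card_eq_sum_card_image f univ, ← smul_eq_mul, ← sum_const]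
  refine sum_congr rfl fun c hc => ?_
  obtain ⟨g, -, rfl⟩ := mem_image.1 hc
  exact AddMonoidHom.card_fiber_eq_of_mem_range f ⟨0, map_zero f⟩ ⟨g, rfl⟩

theorem Finset.card_filter_prod_ne_add_card_filter {α β : Type*} [Fintype α] [Fintype β]
    [DecidableEq β] (p : α → Prop) (r : β → Prop) [DecidablePred p] [DecidablePred r]
    (g : α → β) :
    #{v : α × β | p v.1 ∧ v.2 ≠ g v.1 ∧ r v.2} + #{a | p a ∧ r (g a)} =
      #{a | p a} * #{b | r b} := by
  rw [← card_product, ← card_filter_add_card_filter_not (fun v : α × β => v.2 ≠ g v.1)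
    (s := ({a | p a} : Finset α) ×ˢ ({b | r b} : Finset β))]
  congr 1
  · congr 1
    ext v
    simp only [mem_filter, mem_univ, true_and, mem_product]
    tauto
  · refine card_nbij' (fun a => (a, g a)) Prod.fst (fun a ha => ?_) (fun v hv => ?_)
      (fun _ _ => rfl) (fun v hv => ?_) <;>
      simp only [coe_filter, mem_filter, mem_product, mem_univ, true_and, Set.mem_ofPred_eq,
        not_not, and_true] at *
    · exact ha
    · obtain ⟨⟨hp, hr⟩, hv⟩ := hv
      exact ⟨hp, hv ▸ hr⟩
    · exact Prod.ext rfl hv.2.symm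

section FiniteField

variable {K : Type*} [Field K] [Fintype K] {q : ℕ}

theorem FiniteField.add_pow_of_dvd_card (hq : q ∣ Fintype.card K) (x y : K) :
    (x + y) ^ q = x ^ q + y ^ q := by
  obtain ⟨n, hp, hn⟩ := FiniteField.card K (ringChar K)
  have := Fact.mk hp
  obtain ⟨m, -, rfl⟩ := (Nat.dvd_prime_pow hp).1 (hn ▸ hq)
  exact add_pow_char_pow ..

theorem FiniteField.neg_one_pow_of_dvd_card (hq : q ∣ Fintype.card K) : (-1 : K) ^ q = -1 := by
  have h := FiniteField.add_pow_of_dvd_card hq 1 (-1 : K)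
  rw [add_neg_cancel, one_pow, zero_pow (ne_zero_of_dvd_ne_zero Fintype.card_ne_zero hq)] at h
  exact (neg_eq_of_add_eq_zero_right h.symm).symm

theorem FiniteField.card_filter_pow_eq_self_le [DecidableEq K] (hq : 1 < q) :
    #{x : K | x ^ q = x} ≤ q :=
  calc #{x : K | x ^ q = x} = #{x : K | (X ^ q - X : K[X]).eval x = 0} := by
        simp only [eval_sub, eval_pow, eval_X, sub_eq_zero]
    _ ≤ q := (card_filter_eval_eq_zero_le (FiniteField.X_pow_card_sub_X_ne_zero K hq)).trans_eq
        (FiniteField.X_pow_card_sub_X_natDegree_eq K hq)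

end FiniteField

section CubicTrace

variable {K : Type*} [Field K] [Fintype K] {q : ℕ}

/-- For `|K| = q³` this is the trace of `K` over its subfield with `q` elements. -/
def cubicTrace (q : ℕ) (x : K) : K := x + x ^ q + x ^ q ^ 2

theorem one_lt_of_card_eq_pow_three (hK : Fintype.card K = q ^ 3) : 1 < q := by
  have h := hK ▸ (Fintype.one_lt_card : 1 < Fintype.card K)
  by_contra! hq
  interval_cases q <;> simp at h

theorem pow_pow_pow_of_card_eq_pow_three (hK : Fintype.card K = q ^ 3) (x : K) :
    ((x ^ q) ^ q) ^ q = x := by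
  rw [← pow_mul, ← pow_mul, ← pow_three, ← hK, FiniteField.pow_card]

theorem cubicTrace_add (hK : Fintype.card K = q ^ 3) (x y : K) :
    cubicTrace q (x + y) = cubicTrace q x + cubicTrace q y := by
  have hadd := FiniteField.add_pow_of_dvd_card (hK ▸ dvd_pow_self q three_ne_zero)
  simp only [cubicTrace, sq, pow_mul, hadd]
  ring

def cubicTraceHom (hK : Fintype.card K = q ^ 3) : K →+ K :=
  AddMonoidHom.mk' (cubicTrace q) (cubicTrace_add hK)

theorem cubicTrace_pow (hK : Fintype.card K = q ^ 3) (x : K) :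
    cubicTrace q (x ^ q) = cubicTrace q x := by
  simp only [cubicTrace, sq, pow_mul, pow_pow_pow_of_card_eq_pow_three hK]
  ring

theorem cubicTrace_neg_pow (hK : Fintype.card K = q ^ 3) (x : K) :
    cubicTrace q (-x ^ q) = -cubicTrace q x := by
  rw [← cubicTrace_pow hK x]
  exact map_neg (cubicTraceHom hK) (x ^ q)

theorem pow_cubicTrace (hK : Fintype.card K = q ^ 3) (x : K) :
    cubicTrace q x ^ q = cubicTrace q x := by
  have hadd := FiniteField.add_pow_of_dvd_card (hK ▸ dvd_pow_self q three_ne_zero)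
  simp only [cubicTrace, sq, pow_mul, hadd, pow_pow_pow_of_card_eq_pow_three hK]
  ring

theorem card_filter_cubicTrace_eq_zero_le [DecidableEq K] (hK : Fintype.card K = q ^ 3) :
    #{x : K | cubicTrace q x = 0} ≤ q ^ 2 := by
  have hq := one_lt_of_card_eq_pow_three hK
  have hdeg₁ : (X + X ^ q : K[X]).natDegree = q := by
    rw [natDegree_add_eq_right_of_natDegree_lt] <;> simp [hq]
  have hdeg : (X + X ^ q + X ^ q ^ 2 : K[X]).natDegree = q ^ 2 := by
    rw [natDegree_add_eq_right_of_natDegree_lt] <;> simp only [natDegree_X_pow, hdeg₁]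
    exact lt_self_pow₀ hq one_lt_two
  have hne : (X + X ^ q + X ^ q ^ 2 : K[X]) ≠ 0 := by
    rintro h
    rw [h, natDegree_zero] at hdeg
    exact (pow_pos (zero_lt_one.trans hq) 2).ne hdeg
  calc #{x : K | cubicTrace q x = 0} = #{x | (X + X ^ q + X ^ q ^ 2 : K[X]).eval x = 0} := by
        congr! 3; simp [cubicTrace]
    _ ≤ q ^ 2 := (card_filter_eval_eq_zero_le hne).trans_eq hdeg

theorem card_filter_cubicTrace_eq [DecidableEq K] (hK : Fintype.card K = q ^ 3) {c : K}
    (hc : c ^ q = c) : #{x | cubicTrace q x = c} = q ^ 2 := by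
  set f : K →+ K := cubicTraceHom hK
  have hq := one_lt_of_card_eq_pow_three hK
  have hprod : #(univ.image f) * #{x | f x = 0} = q ^ 3 := hK ▸ f.card_image_mul_card_ker
  have himage : univ.image f ⊆ ({x | x ^ q = x} : Finset K) := fun y hy => by
    obtain ⟨x, -, rfl⟩ := mem_image.1 hy
    simpa [f, cubicTraceHom] using pow_cubicTrace hK x
  have himage_le := (card_le_card himage).trans (FiniteField.card_filter_pow_eq_self_le hq)
  have hker : #{x | f x = 0} = q ^ 2 := by
    refine (card_filter_cubicTrace_eq_zero_le hK).antisymm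
      (Nat.le_of_mul_le_mul_left ?_ (zero_lt_one.trans hq))
    calc q * q ^ 2 = #(univ.image f) * #{x | f x = 0} := by rw [hprod]; ring
      _ ≤ q * #{x | f x = 0} := Nat.mul_le_mul_right _ himage_le
  have himage_ge : q ≤ #(univ.image f) := by
    refine Nat.le_of_mul_le_mul_right (le_of_eq ?_) (pow_pos (zero_lt_one.trans hq) 2)
    rw [← hker, hprod, hker]
    ring
  have hc_mem : c ∈ univ.image f := by
    rw [eq_of_subset_of_card_le himage
      ((FiniteField.card_filter_pow_eq_self_le hq).trans himage_ge)]
    simpa using hc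
  obtain ⟨y, -, rfl⟩ := mem_image.1 hc_mem
  rw [← hker]
  exact AddMonoidHom.card_fiber_eq_of_mem_range f ⟨y, rfl⟩ ⟨0, map_zero f⟩

theorem card_filter_cubicTrace_ne_add [DecidableEq K] (hK : Fintype.card K = q ^ 3) {c : K}
    (hc : c ^ q = c) : #{x | cubicTrace q x ≠ c} + q ^ 2 = q ^ 3 := by
  rw [← card_filter_cubicTrace_eq hK hc, ← hK, ← card_univ, add_comm]
  exact card_filter_add_card_filter_not _

theorem card_filter_ne_zero_and_cubicTrace_ne_add [DecidableEq K] (hK : Fintype.card K = q ^ 3)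
    {c : K} (hc : c ^ q = c) (hc₀ : c ≠ 0) :
    #{x | x ≠ 0 ∧ cubicTrace q x ≠ c} + 1 + q ^ 2 = q ^ 3 := by
  have hq : q ≠ 0 := (zero_lt_one.trans (one_lt_of_card_eq_pow_three hK)).ne'
  have h0 : (0 : K) ∈ ({x | cubicTrace q x ≠ c} : Finset K) :=
    mem_filter.2 ⟨mem_univ 0, by simpa [cubicTrace, hq] using hc₀.symm⟩
  have herase : ({x | x ≠ 0 ∧ cubicTrace q x ≠ c} : Finset K) =
      ({x | cubicTrace q x ≠ c} : Finset K).erase 0 := by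
    ext x
    simp [and_comm]
  rw [herase, card_erase_add_one h0, card_filter_cubicTrace_ne_add hK hc]

theorem natCard_eq_card_filter_shear [DecidableEq K] (hK : Fintype.card K = q ^ 3) :
    Nat.card {v : K × K // v.1 ≠ 0 ∧ v.1 + v.1 ^ q + v.2 ≠ 0 ∧
        cubicTrace q v.1 + cubicTrace q v.2 ≠ 1} =
      #{v : K × K | v.1 ≠ 0 ∧ v.2 ≠ -v.1 ^ q ∧ cubicTrace q v.2 ≠ 1} := by
  rw [← Fintype.card_subtype, ← Nat.card_eq_fintype_card]
  refine Nat.card_congr (Equiv.subtypeEquiv (Equiv.prodShear (Equiv.refl K) Equiv.addLeft)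
    fun v => ?_)
  simp only [Equiv.prodShear_apply, Equiv.refl_apply, Equiv.coe_addLeft, ne_eq,
    eq_neg_iff_add_eq_zero, add_right_comm, cubicTrace_add hK]

theorem card_filter_shear [DecidableEq K] (hK : Fintype.card K = q ^ 3) :
    (#{v : K × K | v.1 ≠ 0 ∧ v.2 ≠ -v.1 ^ q ∧ cubicTrace q v.2 ≠ 1} : ℤ) =
      ((q : ℤ) ^ 3 - 1) * ((q : ℤ) ^ 3 - q ^ 2) - ((q : ℤ) ^ 3 - q ^ 2 - 1) := by
  have hsplit := card_filter_prod_ne_add_card_filter (· ≠ (0 : K)) (cubicTrace q · ≠ 1)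
    (fun a => -a ^ q)
  simp only [cubicTrace_neg_pow hK, ne_eq, neg_eq_iff_eq_neg] at hsplit
  have hone := card_filter_cubicTrace_ne_add hK (one_pow q)
  have hneg := card_filter_ne_zero_and_cubicTrace_ne_add hK
    (FiniteField.neg_one_pow_of_dvd_card (hK ▸ dvd_pow_self q three_ne_zero))
    (neg_ne_zero.2 one_ne_zero)
  have hunits : #{a : K | a ≠ 0} + 1 = q ^ 3 := by
    rw [filter_ne' univ 0, card_erase_add_one (mem_univ 0), card_univ, hK]
  simp only [ne_eq] at hone hneg hunits ⊢
  zify at hsplit hone hneg hunits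
  linear_combination
    hsplit + (#{x : K | ¬x = 0} : ℤ) * hone + ((q : ℤ) ^ 3 - q ^ 2) * hunits - hneg

end CubicTrace

theorem stmt_6_general (K : Type) [Field K] [Fintype K] (q : ℕ)
    (hK : Fintype.card K = q ^ 3) :
    (Nat.card {v : K × K //
        v.1 ≠ 0 ∧
        v.1 + v.1 ^ q + v.2 ≠ 0 ∧
        (v.1 + v.1 ^ q + v.1 ^ q ^ 2) + (v.2 + v.2 ^ q + v.2 ^ q ^ 2) ≠ 1} : ℤ)
      = q ^ 6 - q ^ 5 - 2 * q ^ 3 + 2 * q ^ 2 + 1 := by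
  classical
  have hshear := natCard_eq_card_filter_shear hK
  have hcount := card_filter_shear hK
  unfold cubicTrace at hshear hcount
  rw [hshear, hcount]
  ring

/-- Let `k = 𝔽_q ⊆ K = 𝔽_{q³}` be finite fields of characteristic 2 with trace
`Tr(x) = x + x^q + x^{q²}`. The number of pairs `(a,d)` with `a ∈ K*`, `d ∈ K`
satisfying `a + a^q + d ≠ 0` and `Tr(a) + Tr(d) ≠ 1` equals
`q⁶ - q⁵ - 2q³ + 2q² + 1`. -/
theorem stmt_6 (K : Type) [Field K] [Fintype K] [CharP K 2] (q : ℕ)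
    (hK : Fintype.card K = q ^ 3) :
    (Nat.card {v : K × K //
        v.1 ≠ 0 ∧
        v.1 + v.1 ^ q + v.2 ≠ 0 ∧
        (v.1 + v.1 ^ q + v.1 ^ q ^ 2) + (v.2 + v.2 ^ q + v.2 ^ q ^ 2) ≠ 1} : ℤ)
      = q ^ 6 - q ^ 5 - 2 * q ^ 3 + 2 * q ^ 2 + 1 :=
  stmt_6_general K q hK
end

section
/- Let $k = \mathbb{F}_q$ be a finite field of characteristic $2$, let $K_2 = \mathbb{F}_{q^2} \subseteq K_4 = \mathbb{F}_{q^4}$ be the extensions of $k$ of degrees $2$ and $4$ with trace maps to $k$, and let $X = \{(b,c) \in K_2^* \times K_4^* \mid \mathrm{Tr}_{K_4/k}(c) + \mathrm{Tr}_{K_2/k}(b) \neq 1\}$. The Frobenius map $\varphi(b,c) = (b^q, c^q)$ maps $X$ to itself and the number of its orbits on $X$ equals $\frac{1}{4}\left(q^6 - q^5 - q^2 - 2q + 4\right)$. -/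
/-!
Burnside's lemma for the action of `ZMod 4` by powers of `φ` (note `φ⁴ = id`) gives
`4 · #orbits = |X| + |Fix φ| + |Fix φ²| + |Fix φ³|`, and `Fix φ³ = Fix φ`.

The counts come from the trace `Tr(x) = x + x^q + ⋯ + x^(q^(n-1))` of `𝔽_(q^n)` over `𝔽_q`: it is
additive with values in `𝔽_q`, and its kernel has at most `q^(n-1)` elements since it is cut out
by a polynomial of that degree, so every fibre over `𝔽_q` has exactly `q^(n-1)` elements.
For `b ≠ 0` this leaves `q⁴ - q³ - [Tr(b) ≠ 1]` admissible `c`, whence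
`|X| = (q²-1)(q⁴-q³) - (q²-q-1)`.
On `Fix φ` (pairs over `𝔽_q`) and on `Fix φ²` (`c ∈ 𝔽_(q²)`) the trace of `c` vanishes in
characteristic 2, which gives `|Fix φ| = (q-1)²` and `|Fix φ²| = (q²-q-1)(q²-1)`.
-/

/-- The defining conditions of the set `X` of descent data `𝒟_{γ₄}`:
pairs `(b,c) ∈ K₂* × K₄*` with `Tr_{K₄/k}(c) + Tr_{K₂/k}(b) ≠ 1`. -/
def stmt9Cond (K₂ K₄ : Type) [Field K₂] [Field K₄] [Algebra K₂ K₄] (q : ℕ)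
    (v : K₂ × K₄) : Prop :=
  v.1 ≠ 0 ∧ v.2 ≠ 0 ∧
    (v.2 + v.2 ^ q + v.2 ^ q ^ 2 + v.2 ^ q ^ 3)
      + algebraMap K₂ K₄ (v.1 + v.1 ^ q) ≠ 1

open Finset Polynomial

theorem pow_eq_self_iff_pow_pred_eq_one {M₀ : Type*} [MonoidWithZero M₀] [IsRightCancelMulZero M₀]
    {x : M₀} {q : ℕ} (hx : x ≠ 0) (hq : q ≠ 0) : x ^ q = x ↔ x ^ (q - 1) = 1 := by
  nth_rewrite 2 [← one_mul x]
  rw [← pow_sub_one_mul hq, mul_left_inj' hx]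

theorem Finset.card_filter_ne_and_add_ite {α : Type*} [Fintype α] [DecidableEq α]
    (a : α) (P : α → Prop) [DecidablePred P] :
    #{x | x ≠ a ∧ P x} + (if P a then 1 else 0) = #{x | P x} := by
  have herase : ({x | x ≠ a ∧ P x} : Finset α) = ({x | P x} : Finset α).erase a := by
    ext x; simp [and_comm]
  rw [herase]
  split_ifs with ha
  · exact card_erase_add_one (by simpa using ha)
  · rw [erase_eq_of_notMem (by simpa using ha), add_zero]

theorem Finset.card_filter_prod_eq_sum {α β : Type*} [Fintype α] [Fintype β]
    (P : α × β → Prop) [DecidablePred P] : #{v | P v} = ∑ a, #{b | P (a, b)} := by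
  simp only [card_filter, Fintype.sum_prod_type]

theorem Finset.card_filter_prod_mk {α β : Type*} [Fintype α] [Fintype β]
    (P : α → Prop) (Q : β → Prop) [DecidablePred P] [DecidablePred Q] :
    #{v : α × β | P v.1 ∧ Q v.2} = #{a | P a} * #{b | Q b} := by
  rw [← card_product, ← filter_product, univ_product_univ]

theorem IsCyclic.card_pow_eq_one_of_dvd {G : Type*} [Group G] [Fintype G] [DecidableEq G]
    [IsCyclic G] {d : ℕ} (hd : d ∣ Fintype.card G) : #{g : G | g ^ d = 1} = d := by
  have hd0 : 0 < d := Nat.pos_of_dvd_of_pos hd Fintype.card_pos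
  refine le_antisymm (IsCyclic.card_pow_eq_one_le hd0) ?_
  obtain ⟨a, ha⟩ : ∃ a : G, orderOf a = d := by
    have hpos : 0 < #{a : G | orderOf a = d} := by
      rw [IsCyclic.card_orderOf_eq_totient hd]; exact Nat.totient_pos.mpr hd0
    obtain ⟨a, ha⟩ := card_pos.mp hpos
    exact ⟨a, (mem_filter.mp ha).2⟩
  calc d = #((range d).image (a ^ ·)) := by
        rw [card_image_of_injOn, card_range]
        intro i hi j hj hij
        exact pow_injOn_Iio_orderOf (by simpa [ha] using hi) (by simpa [ha] using hj) hij
    _ ≤ #{g : G | g ^ d = 1} := by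
        refine card_le_card fun g hg => ?_
        obtain ⟨i, -, rfl⟩ := mem_image.mp hg
        rw [mem_filter, ← pow_mul, mul_comm, pow_mul, ← ha, pow_orderOf_eq_one, one_pow]
        exact ⟨mem_univ _, rfl⟩

theorem Prod.iterate_pow_eq_self_iff {M N : Type*} [Monoid M] [Monoid N] (q k : ℕ) (v : M × N) :
    (fun v : M × N => (v.1 ^ q, v.2 ^ q))^[k] v = v ↔ v.1 ^ q ^ k = v.1 ∧ v.2 ^ q ^ k = v.2 := by
  change (Prod.map (· ^ q) (· ^ q))^[k] v = v ↔ _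
  rw [Prod.map_iterate, pow_iterate, pow_iterate, Prod.ext_iff]
  rfl

theorem Function.iterate_eq_self_iff_of_iterate_succ {α : Type*} {f : α → α} {x : α} {n : ℕ}
    (hx : f^[n + 1] x = x) : f^[n] x = x ↔ f x = x := by
  refine ⟨fun h => ?_, fun h => Function.IsFixedPt.iterate h n⟩
  calc f x = f (f^[n] x) := by rw [h]
    _ = x := by rw [← Function.iterate_succ_apply' f n x, hx]

theorem Fintype.one_lt_of_card_eq_pow {α : Type*} [Fintype α] [Nontrivial α] {q n : ℕ}
    (h : Fintype.card α = q ^ n) : 1 < q := by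
  by_contra! hq
  have := Fintype.one_lt_card (α := α)
  have : q ^ n ≤ 1 := pow_le_one₀ (Nat.zero_le q) hq
  omega

theorem AddMonoidHom.card_fiber_eq_of_forall_mem {G H : Type*} [AddGroup G] [AddGroup H]
    [Fintype G] [DecidableEq H] (f : G →+ H) {F : Finset H} {a : ℕ} (hF : ∀ x, f x ∈ F)
    (hker : #{x | f x = 0} ≤ a) (hcard : Fintype.card G = a * #F) {t : H} (ht : t ∈ F) :
    #{x | f x = t} = a := by
  have hle : ∀ t ∈ F, #{x | f x = t} ≤ a := by
    intro t _
    obtain h | ⟨x₀, hx₀⟩ := (filter (fun x => f x = t) univ).eq_empty_or_nonempty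
    · rw [h, card_empty]; exact Nat.zero_le a
    · refine le_trans (card_le_card_of_injOn (· - x₀) (fun x hx => ?_) fun x _ y _ h => ?_) hker
      · simp only [coe_filter, mem_univ, true_and, Set.mem_ofPred_eq] at hx ⊢
        rw [map_sub, hx, (mem_filter.mp hx₀).2, sub_self]
      · simpa using h
  have hsum : ∑ t ∈ F, #{x | f x = t} = ∑ _t ∈ F, a := by
    rw [← card_eq_sum_card_fiberwise fun x _ => hF x, card_univ, hcard, sum_const, smul_eq_mul,
      mul_comm]
  exact (sum_eq_sum_iff_of_le hle).mp hsum t ht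

theorem Polynomial.natDegree_sum_X_pow_pow {R : Type*} [Semiring R] [Nontrivial R] {q : ℕ}
    (hq : 1 < q) (n : ℕ) : (∑ i ∈ range (n + 1), (X : R[X]) ^ q ^ i).natDegree = q ^ n := by
  induction n with
  | zero => simp
  | succ n ih =>
    rw [sum_range_succ, natDegree_add_eq_right_of_natDegree_lt] <;> rw [natDegree_X_pow]
    rw [ih]
    exact Nat.pow_lt_pow_right hq (by omega)

/-- For `R = 𝔽_(q^n)` this is the trace `Tr_{R/𝔽_q}`. -/
def frobTrace {R : Type*} [Semiring R] (q n : ℕ) (x : R) : R := ∑ i ∈ range n, x ^ q ^ i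

section FrobTrace

variable {R : Type*} [CommRing R] {q n : ℕ}

theorem frobTrace_zero (hq : q ≠ 0) : frobTrace q n (0 : R) = 0 := by
  simp [frobTrace, hq]

theorem frobTrace_pow_of_pow_eq_self {x : R} (hx : x ^ q ^ n = x) :
    frobTrace q n (x ^ q) = frobTrace q n x := by
  have h := (sum_range_succ' (fun i => x ^ q ^ i) n).symm.trans (sum_range_succ _ n)
  rw [pow_zero, pow_one, hx] at h
  simpa only [frobTrace, ← pow_mul, ← pow_succ'] using add_right_cancel h

theorem frobTrace_add_of_pow_eq_self {x : R} (hx : x ^ q ^ n = x) (d : ℕ) :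
    frobTrace q (n + d) x = frobTrace q n x + frobTrace q d x := by
  rw [frobTrace, sum_range_add]
  congr 1
  exact sum_congr rfl fun i _ => by rw [pow_add, pow_mul, hx]

theorem frobTrace_add_self_eq_zero [CharP R 2] {x : R} (hx : x ^ q ^ n = x) :
    frobTrace q (n + n) x = 0 := by
  rw [frobTrace_add_of_pow_eq_self hx, CharTwo.add_self_eq_zero]

variable {p m : ℕ} [ExpChar R p]

theorem frobTrace_add (hq : q = p ^ m) (x y : R) :
    frobTrace q n (x + y) = frobTrace q n x + frobTrace q n y := by
  subst hq
  simp only [frobTrace, ← sum_add_distrib, ← pow_mul, add_pow_expChar_pow]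

theorem frobTrace_pow (hq : q = p ^ m) (x : R) : frobTrace q n (x ^ q) = frobTrace q n x ^ q := by
  subst hq
  simp only [frobTrace, sum_pow_char_pow, ← pow_mul, mul_comm]

end FrobTrace

section FiniteField

variable {K : Type*} [Field K] [Fintype K] {q n : ℕ}

theorem exists_eq_pow_of_card_eq_pow {p : ℕ} [CharP K p] (hK : Fintype.card K = q ^ n)
    (hn : n ≠ 0) : ∃ m, q = p ^ m := by
  obtain ⟨k, hp, hk⟩ := FiniteField.card K p
  obtain ⟨m, -, hm⟩ := (Nat.dvd_prime_pow hp).mp (hk ▸ hK ▸ dvd_pow_self q hn)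
  exact ⟨m, hm⟩

variable [DecidableEq K]

theorem card_filter_frobTrace_eq_zero_le (hq : 1 < q) :
    #{x : K | frobTrace q (n + 1) x = 0} ≤ q ^ n := by
  have hdeg := natDegree_sum_X_pow_pow (R := K) hq n
  have hP : ∑ i ∈ range (n + 1), (X : K[X]) ^ q ^ i ≠ 0 := fun h => by
    rw [h, natDegree_zero] at hdeg
    exact (pow_pos (by omega) n).ne hdeg
  rw [← hdeg]
  refine card_le_degree_of_subset_roots fun x hx => (mem_roots hP).mpr ?_
  simpa [frobTrace, eval_finsetSum] using (mem_filter.mp hx).2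

theorem card_filter_ne_zero_pow_eq_self_add_one (hK : Fintype.card K = q ^ n) :
    #{x : K | x ≠ 0 ∧ x ^ q = x} + 1 = q := by
  have hq := Fintype.one_lt_of_card_eq_pow hK
  have hunits : #{u : Kˣ | u ^ (q - 1) = 1} = q - 1 := by
    refine IsCyclic.card_pow_eq_one_of_dvd ?_
    rw [Fintype.card_units, hK]
    simpa using Nat.sub_dvd_pow_sub_pow q 1 n
  have hbij : #{u : Kˣ | u ^ (q - 1) = 1} = #{x : K | x ≠ 0 ∧ x ^ q = x} := by
    refine card_bij (fun u _ => (u : K)) (fun u hu => ?_) (fun u _ v _ h => Units.ext h)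
      (fun x hx => ?_)
    · rw [mem_filter] at hu ⊢
      rw [pow_eq_self_iff_pow_pred_eq_one u.ne_zero (by omega), ← Units.val_pow_eq_pow_val,
        hu.2, Units.val_one]
      exact ⟨mem_univ _, u.ne_zero, rfl⟩
    · obtain ⟨-, hx0, hxq⟩ := mem_filter.mp hx
      refine ⟨Units.mk0 x hx0, mem_filter.mpr ⟨mem_univ _, Units.ext ?_⟩, rfl⟩
      simpa [← pow_eq_self_iff_pow_pred_eq_one hx0 (by omega : q ≠ 0)] using hxq
  omega

theorem card_filter_frobTrace_eq {p m : ℕ} [ExpChar K p] (hq : q = p ^ m)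
    (hK : Fintype.card K = q ^ (n + 1)) {t : K} (ht : t ^ q = t) :
    #{x : K | frobTrace q (n + 1) x = t} = q ^ n := by
  have hq1 := Fintype.one_lt_of_card_eq_pow hK
  have hF : #{x : K | x ^ q = x} = q := by
    rw [← card_filter_ne_and_add_ite, if_pos (zero_pow (by omega)),
      card_filter_ne_zero_pow_eq_self_add_one hK]
  refine (AddMonoidHom.mk' (frobTrace q (n + 1)) (frobTrace_add hq)).card_fiber_eq_of_forall_mem
    (F := {x | x ^ q = x}) (fun x => ?_) (card_filter_frobTrace_eq_zero_le hq1) ?_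
    (by simpa using ht)
  · simpa [← frobTrace_pow hq] using frobTrace_pow_of_pow_eq_self (hK ▸ FiniteField.pow_card x)
  · rw [hK, hF, pow_succ]

theorem card_filter_ne_zero_frobTrace_ne {p m : ℕ} [ExpChar K p] (hq : q = p ^ m)
    (hK : Fintype.card K = q ^ (n + 1)) {t : K} (ht : t ^ q = t) :
    (#{x : K | x ≠ 0 ∧ frobTrace q (n + 1) x ≠ t} : ℤ) =
      q ^ (n + 1) - q ^ n - if t ≠ 0 then 1 else 0 := by
  have hfiber := card_filter_frobTrace_eq hq hK ht
  have hsplit := card_filter_add_card_filter_not (s := univ) fun x : K => frobTrace q (n + 1) x = t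
  have hzero := card_filter_ne_and_add_ite 0 fun x : K => frobTrace q (n + 1) x ≠ t
  rw [card_univ, hK, hfiber] at hsplit
  have hq0 : q ≠ 0 := Nat.ne_zero_of_lt (Fintype.one_lt_of_card_eq_pow hK)
  simp only [frobTrace_zero hq0, eq_comm (a := (0 : K)), ne_eq] at hzero hsplit ⊢
  zify at hsplit hzero
  split_ifs at hzero ⊢ <;> linarith

end FiniteField

section IterateAction

variable {S : Type*} {n : ℕ} [NeZero n]

abbrev iterateAddAction (f : S → S) (hf : f^[n] = id) : AddAction (ZMod n) S where
  vadd k x := f^[k.val] x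
  zero_vadd x := by
    show f^[(0 : ZMod n).val] x = x
    rw [ZMod.val_zero, Function.iterate_zero_apply]
  add_vadd a b x := by
    show f^[(a + b).val] x = f^[a.val] (f^[b.val] x)
    rw [ZMod.val_add, (show Function.IsPeriodicPt f n x from congrFun hf x).iterate_mod_apply,
      Function.iterate_add_apply]

theorem card_quot_iterate_mul [Finite S] {f : S → S} (hf : f^[n] = id) :
    n * Nat.card (Quot fun x y : S => f x = y) = ∑ k ∈ range n, Nat.card {x // f^[k] x = x} := by
  let := iterateAddAction f hf
  have hquot : Quot (fun x y : S => f x = y) ≃ Quotient (AddAction.orbitRel (ZMod n) S) := by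
    refine
      { toFun := Quot.lift (Quotient.mk _) fun x y hxy => Quotient.sound ?_
        invFun := Quotient.lift (Quot.mk _) fun x y hxy => ?_
        left_inv := fun a => by induction a using Quot.ind; rfl
        right_inv := fun a => by induction a using Quotient.ind; rfl }
    · change x ∈ AddAction.orbit (ZMod n) y
      rw [AddAction.mem_orbit_symm]
      refine ⟨1, ?_⟩
      change f^[(1 : ZMod n).val] x = y
      rwa [ZMod.val_one_eq_one_mod,
        (show Function.IsPeriodicPt f n x from congrFun hf x).iterate_mod_apply]
    · obtain ⟨k, rfl⟩ : x ∈ AddAction.orbit (ZMod n) y := hxy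
      change Quot.mk _ (f^[k.val] y) = Quot.mk _ y
      induction k.val with
      | zero => rfl
      | succ i ih =>
        rw [Function.iterate_succ_apply', ← ih]
        exact (Quot.sound (r := fun x y : S => f x = y) rfl).symm
  have : Fintype S := Fintype.ofFinite S
  have : Fintype (Quotient (AddAction.orbitRel (ZMod n) S)) := Fintype.ofFinite _
  have : ∀ k : ZMod n, Fintype (AddAction.fixedBy S k) := fun _ => Fintype.ofFinite _
  have hburnside := AddAction.sum_card_fixedBy_eq_card_orbits_mul_card_addGroup (ZMod n) S
  rw [ZMod.card] at hburnside
  rw [Nat.card_congr hquot, Nat.card_eq_fintype_card, mul_comm, ← hburnside]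
  obtain ⟨m, rfl⟩ : ∃ m, n = m + 1 := Nat.exists_eq_succ_of_ne_zero (NeZero.ne n)
  rw [← Fin.sum_univ_eq_sum_range]
  exact Fintype.sum_congr _ _ fun k => (Nat.card_eq_fintype_card).symm

theorem card_quot_subtype_iterate_mul [Fintype S] [DecidableEq S] {f : S → S} {P : S → Prop}
    [DecidablePred P] (hP : ∀ v, P v → P (f v)) (hf : f^[n] = id) :
    n * Nat.card (Quot fun x y : {v // P v} => f x.1 = y.1) =
      ∑ k ∈ range n, #{v | P v ∧ f^[k] v = v} := by
  set g : {v // P v} → {v // P v} := Subtype.map f hP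
  have hg (k : ℕ) (x : {v // P v}) : (g^[k] x).1 = f^[k] x.1 :=
    (Function.Semiconj.iterate_right (fun _ => rfl : Function.Semiconj Subtype.val g f) k) x
  have hrel : (fun x y : {v // P v} => f x.1 = y.1) = fun x y => g x = y := by
    ext x y; exact (Subtype.ext_iff (a1 := g x)).symm
  rw [hrel, card_quot_iterate_mul (funext fun x => Subtype.ext (by rw [hg, hf]; rfl))]
  refine sum_congr rfl fun k _ => ?_
  rw [← Fintype.card_subtype, ← Nat.card_eq_fintype_card]
  exact Nat.card_congr ((Equiv.subtypeEquivRight fun x => by rw [Subtype.ext_iff, hg]).trans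
    (Equiv.subtypeSubtypeEquivSubtypeInter P fun v => f^[k] v = v))

end IterateAction

theorem stmt9Cond_iff_frobTrace {K₂ K₄ : Type} [Field K₂] [Field K₄] [Algebra K₂ K₄] {q : ℕ}
    (v : K₂ × K₄) : stmt9Cond K₂ K₄ q v ↔
      v.1 ≠ 0 ∧ v.2 ≠ 0 ∧ frobTrace q 4 v.2 + algebraMap K₂ K₄ (frobTrace q 2 v.1) ≠ 1 := by
  simp only [stmt9Cond, frobTrace, sum_range_succ, sum_range_zero, zero_add, pow_zero, pow_one]

section Stmt9

variable {K₂ K₄ : Type} [Field K₂] [Fintype K₂] [Field K₄] [Fintype K₄] [Algebra K₂ K₄] {q : ℕ}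

theorem stmt9Cond_pow (h2 : Fintype.card K₂ = q ^ 2) (h4 : Fintype.card K₄ = q ^ 4)
    (v : K₂ × K₄) (hv : stmt9Cond K₂ K₄ q v) : stmt9Cond K₂ K₄ q (v.1 ^ q, v.2 ^ q) := by
  rw [stmt9Cond_iff_frobTrace] at hv ⊢
  obtain ⟨hb, hc, h⟩ := hv
  refine ⟨pow_ne_zero _ hb, pow_ne_zero _ hc, ?_⟩
  rwa [frobTrace_pow_of_pow_eq_self (h4 ▸ FiniteField.pow_card v.2),
    frobTrace_pow_of_pow_eq_self (h2 ▸ FiniteField.pow_card v.1)]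

variable [DecidableEq K₂] [DecidableEq K₄] [CharP K₂ 2] [CharP K₄ 2] {m : ℕ}

theorem card_ne_zero_frobTrace_two_ne_one (hq : q = 2 ^ m) (h2 : Fintype.card K₂ = q ^ 2) :
    (#{b : K₂ | b ≠ 0 ∧ frobTrace q 2 b ≠ 1} : ℤ) = q ^ 2 - q - 1 := by
  rw [card_filter_ne_zero_frobTrace_ne (n := 1) hq h2 (one_pow q), if_pos one_ne_zero, pow_one]

theorem card_stmt9Cond [DecidablePred (stmt9Cond K₂ K₄ q)] (hq : q = 2 ^ m)
    (h2 : Fintype.card K₂ = q ^ 2) (h4 : Fintype.card K₄ = q ^ 4) :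
    (#{v | stmt9Cond K₂ K₄ q v} : ℤ) = (q ^ 2 - 1) * (q ^ 4 - q ^ 3) - (q ^ 2 - q - 1) := by
  have hfiber (b : K₂) (hb : b ≠ 0) : (#{c | stmt9Cond K₂ K₄ q (b, c)} : ℤ) =
      q ^ 4 - q ^ 3 - if frobTrace q 2 b ≠ 1 then 1 else 0 := by
    have hs : (1 + algebraMap K₂ K₄ (frobTrace q 2 b)) ^ q =
        1 + algebraMap K₂ K₄ (frobTrace q 2 b) := by
      rw [hq, add_pow_expChar_pow, one_pow, ← map_pow, ← hq, ← frobTrace_pow hq,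
        frobTrace_pow_of_pow_eq_self (h2 ▸ FiniteField.pow_card b)]
    have hs0 : 1 + algebraMap K₂ K₄ (frobTrace q 2 b) ≠ 0 ↔ frobTrace q 2 b ≠ 1 := by
      rw [ne_eq, add_eq_zero_iff_eq_neg, CharTwo.neg_eq, eq_comm,
        map_eq_one_iff _ (algebraMap K₂ K₄).injective]
    have hcond (c : K₄) : stmt9Cond K₂ K₄ q (b, c) ↔
        c ≠ 0 ∧ frobTrace q (3 + 1) c ≠ 1 + algebraMap K₂ K₄ (frobTrace q 2 b) := by
      simp only [stmt9Cond_iff_frobTrace, ne_eq, ← eq_sub_iff_add_eq, CharTwo.sub_eq_add]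
      exact and_iff_right hb
    rw [filter_congr fun c _ => hcond c, card_filter_ne_zero_frobTrace_ne hq h4 hs,
      if_congr hs0 rfl rfl]
  have hzero : #{c | stmt9Cond K₂ K₄ q (0, c)} = 0 := by
    simp [stmt9Cond_iff_frobTrace]
  have hunits : (#(univ.erase (0 : K₂)) : ℤ) + 1 = q ^ 2 := by
    rw [← Nat.cast_add_one, card_erase_add_one (mem_univ _), card_univ, h2, Nat.cast_pow]
  rw [card_filter_prod_eq_sum, Nat.cast_sum, ← add_sum_erase univ _ (mem_univ 0), hzero,
    Nat.cast_zero, zero_add, sum_congr rfl fun b hb => hfiber b (ne_of_mem_erase hb),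
    sum_sub_distrib, sum_const, sum_boole, ← filter_ne', filter_filter, filter_ne',
    card_ne_zero_frobTrace_two_ne_one hq h2, nsmul_eq_mul]
  linear_combination ((q : ℤ) ^ 4 - q ^ 3) * hunits

theorem card_stmt9Cond_fixed [DecidablePred (stmt9Cond K₂ K₄ q)]
    (h2 : Fintype.card K₂ = q ^ 2) (h4 : Fintype.card K₄ = q ^ 4) :
    (#{v | stmt9Cond K₂ K₄ q v ∧ v.1 ^ q = v.1 ∧ v.2 ^ q = v.2} : ℤ) = (q - 1) ^ 2 := by
  have hcond (v : K₂ × K₄) : (stmt9Cond K₂ K₄ q v ∧ v.1 ^ q = v.1 ∧ v.2 ^ q = v.2) ↔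
      (v.1 ≠ 0 ∧ v.1 ^ q = v.1) ∧ (v.2 ≠ 0 ∧ v.2 ^ q = v.2) := by
    rw [stmt9Cond_iff_frobTrace]
    refine ⟨fun ⟨⟨hb, hc, _⟩, hbq, hcq⟩ => ⟨⟨hb, hbq⟩, hc, hcq⟩,
      fun ⟨⟨hb, hbq⟩, hc, hcq⟩ => ⟨⟨hb, hc, ?_⟩, hbq, hcq⟩⟩
    have hb0 : frobTrace q 2 v.1 = 0 := frobTrace_add_self_eq_zero (n := 1) (by rwa [pow_one])
    have hc0 : frobTrace q 4 v.2 = 0 :=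
      frobTrace_add_self_eq_zero (n := 2) (by rw [sq, pow_mul, hcq, hcq])
    rw [hb0, hc0, map_zero, add_zero]
    exact zero_ne_one
  have hK₂ := card_filter_ne_zero_pow_eq_self_add_one h2
  have hK₄ := card_filter_ne_zero_pow_eq_self_add_one h4
  zify at hK₂ hK₄
  rw [filter_congr fun v _ => hcond v, card_filter_prod_mk (fun b : K₂ => b ≠ 0 ∧ b ^ q = b)
    (fun c : K₄ => c ≠ 0 ∧ c ^ q = c), Nat.cast_mul]
  linear_combination (#{c : K₄ | c ≠ 0 ∧ c ^ q = c} : ℤ) * hK₂ + ((q : ℤ) - 1) * hK₄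

theorem card_stmt9Cond_fixed_two [DecidablePred (stmt9Cond K₂ K₄ q)] (hq : q = 2 ^ m)
    (h2 : Fintype.card K₂ = q ^ 2) (h4 : Fintype.card K₄ = q ^ 4) :
    (#{v | stmt9Cond K₂ K₄ q v ∧ v.1 ^ q ^ 2 = v.1 ∧ v.2 ^ q ^ 2 = v.2} : ℤ) =
      (q ^ 2 - q - 1) * (q ^ 2 - 1) := by
  have hcond (v : K₂ × K₄) : (stmt9Cond K₂ K₄ q v ∧ v.1 ^ q ^ 2 = v.1 ∧ v.2 ^ q ^ 2 = v.2) ↔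
      (v.1 ≠ 0 ∧ frobTrace q 2 v.1 ≠ 1) ∧ (v.2 ≠ 0 ∧ v.2 ^ q ^ 2 = v.2) := by
    rw [stmt9Cond_iff_frobTrace]
    refine ⟨fun ⟨⟨hb, hc, h⟩, _, hc2⟩ => ⟨⟨hb, fun ht => h ?_⟩, hc, hc2⟩,
      fun ⟨⟨hb, ht⟩, hc, hc2⟩ => ⟨⟨hb, hc, fun h => ht ?_⟩, h2 ▸ FiniteField.pow_card v.1, hc2⟩⟩
    · rw [frobTrace_add_self_eq_zero (n := 2) hc2, ht, map_one, zero_add]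
    · rwa [frobTrace_add_self_eq_zero (n := 2) hc2, zero_add,
        map_eq_one_iff _ (algebraMap K₂ K₄).injective] at h
  have hK₄ := card_filter_ne_zero_pow_eq_self_add_one (q := q ^ 2) (n := 2) (by rw [h4]; ring)
  zify at hK₄
  rw [filter_congr fun v _ => hcond v, card_filter_prod_mk
    (fun b : K₂ => b ≠ 0 ∧ frobTrace q 2 b ≠ 1) (fun c : K₄ => c ≠ 0 ∧ c ^ q ^ 2 = c), Nat.cast_mul,
    card_ne_zero_frobTrace_two_ne_one hq h2]
  linear_combination ((q : ℤ) ^ 2 - q - 1) * hK₄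

end Stmt9

/-- Let `k = 𝔽_q` be a finite field of characteristic 2 with extensions
`K₂ = 𝔽_{q²} ⊆ K₄ = 𝔽_{q⁴}`. The Frobenius `φ(b,c) = (b^q, c^q)` maps
`X = 𝒟_{γ₄}` to itself and the number of its orbits on `X` equals
`(q⁶ - q⁵ - q² - 2q + 4)/4`. -/
theorem stmt_9 (K₂ K₄ : Type) [Field K₂] [Fintype K₂] [CharP K₂ 2]
    [Field K₄] [Fintype K₄] [Algebra K₂ K₄] (q : ℕ)
    (h2 : Fintype.card K₂ = q ^ 2) (h4 : Fintype.card K₄ = q ^ 4) :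
    (∀ v : K₂ × K₄, stmt9Cond K₂ K₄ q v → stmt9Cond K₂ K₄ q (v.1 ^ q, v.2 ^ q)) ∧
    (4 : ℤ) * Nat.card (Quot fun (x y : {v : K₂ × K₄ // stmt9Cond K₂ K₄ q v}) =>
        (x.1.1 ^ q, x.1.2 ^ q) = y.1)
      = q ^ 6 - q ^ 5 - q ^ 2 - 2 * q + 4 := by
  classical
  obtain ⟨m, hq⟩ := exists_eq_pow_of_card_eq_pow (p := 2) h2 two_ne_zero
  have : CharP K₄ 2 := charP_of_injective_algebraMap (algebraMap K₂ K₄).injective 2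
  have hφ4 : (fun v : K₂ × K₄ => (v.1 ^ q, v.2 ^ q))^[4] = id := funext fun v =>
    (Prod.iterate_pow_eq_self_iff q 4 v).mpr
      ⟨by rw [show q ^ 4 = (q ^ 2) ^ 2 by ring, ← h2, FiniteField.pow_card_pow],
        h4 ▸ FiniteField.pow_card v.2⟩
  have hφ3 (v : K₂ × K₄) : (fun v : K₂ × K₄ => (v.1 ^ q, v.2 ^ q))^[3] v = v ↔
      (fun v : K₂ × K₄ => (v.1 ^ q, v.2 ^ q))^[1] v = v := by
    rw [Function.iterate_eq_self_iff_of_iterate_succ (congrFun hφ4 v), Function.iterate_one]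
  have hburnside := card_quot_subtype_iterate_mul (stmt9Cond_pow h2 h4) hφ4
  conv at hburnside =>
    rhs
    simp only [sum_range_succ, sum_range_zero, zero_add, hφ3]
    simp only [Prod.iterate_pow_eq_self_iff, pow_zero, pow_one, and_self, and_true]
  zify at hburnside
  rw [card_stmt9Cond hq h2 h4, card_stmt9Cond_fixed h2 h4,
    card_stmt9Cond_fixed_two hq h2 h4] at hburnside
  exact ⟨stmt9Cond_pow h2 h4, by linear_combination hburnside⟩
end

section
/- Let $q = 2^m$ and $k = \mathbb{F}_q$. In $k[X]$, the polynomials $X^{q^3} + X^q + X$ and $X^{q^3} + X^{q^2} + X$ both divide $X^{q^7} + X$. -/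
open Polynomial

/-- Let `q = 2^m` and `k = 𝔽_q`. In `k[X]`, the polynomials `X^{q³} + X^q + X`
and `X^{q³} + X^{q²} + X` both divide `X^{q⁷} + X`. -/
theorem stmt_12 (k : Type) [Field k] [Fintype k] (q m : ℕ) (hm : q = 2 ^ m)
    (hq : Fintype.card k = q) :
    ((X ^ q ^ 3 + X ^ q + X : k[X]) ∣ X ^ q ^ 7 + X) ∧
    ((X ^ q ^ 3 + X ^ q ^ 2 + X : k[X]) ∣ X ^ q ^ 7 + X) := by
  -- char k = 2
  haveI : CharP k (ringChar k) := ringChar.charP k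
  obtain ⟨n, hp, hcard⟩ := FiniteField.card k (ringChar k)
  have hchar : ringChar k = 2 := by
    have hdvd : ringChar k ∣ 2 ^ m := by
      rw [← hm, ← hq, hcard]
      exact dvd_pow_self _ (by exact_mod_cast n.ne_zero)
    have := hp.dvd_of_dvd_pow (n := m) (by simpa using hdvd)
    exact (Nat.prime_dvd_prime_iff_eq hp Nat.prime_two).mp this
  haveI hk2 : CharP k 2 := hchar ▸ ringChar.charP k
  haveI : CharP k[X] 2 := Polynomial.instCharP 2
  haveI : Fact (Nat.Prime 2) := ⟨Nat.prime_two⟩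
  have h2 : (2 : k[X]) = 0 := by exact_mod_cast CharP.cast_eq_zero k[X] 2
  have hq0 : q ≠ 0 := by rw [hm]; positivity
  have frob : ∀ (x y : k[X]) (i : ℕ), (x + y) ^ q ^ i = x ^ q ^ i + y ^ q ^ i := by
    intro x y i
    rw [hm, ← pow_mul]
    exact add_pow_char_pow x y 2 (m * i)
  have key : ∀ a i : ℕ, ((X : k[X]) ^ q ^ a) ^ q ^ i = X ^ q ^ (a + i) := by
    intro a i; rw [← pow_mul, ← pow_add]
  have hXq : (X : k[X]) ^ q = X ^ q ^ 1 := by rw [pow_one]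
  have hL : ∀ a b i : ℕ,
      ((X : k[X]) ^ q ^ a + X ^ q ^ b + X) ^ q ^ i
        = X ^ q ^ (a + i) + X ^ q ^ (b + i) + X ^ q ^ i := by
    intro a b i
    rw [frob, frob, key, key]
  constructor
  · have heq : (X : k[X]) ^ q ^ 7 + X =
        (X ^ q ^ 3 + X ^ q + X) ^ q ^ 4 + (X ^ q ^ 3 + X ^ q + X) ^ q ^ 2
          + (X ^ q ^ 3 + X ^ q + X) ^ q ^ 1 + (X ^ q ^ 3 + X ^ q + X) ^ q ^ 0 := by
      rw [hXq, hL, hL, hL, hL]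
      norm_num
      have : (X : k[X]) ^ q ^ 7 + X ^ q ^ 5 + X ^ q ^ 4 + (X ^ q ^ 5 + X ^ q ^ 3 + X ^ q ^ 2)
          + (X ^ q ^ 4 + X ^ q ^ 2 + X ^ q) + (X ^ q ^ 3 + X ^ q + X)
          = (X ^ q ^ 7 + X)
            + 2 * (X ^ q ^ 5 + X ^ q ^ 4 + X ^ q ^ 3 + X ^ q ^ 2 + X ^ q) := by ring
      rw [this, h2, zero_mul, add_zero]
    rw [heq]
    refine dvd_add (dvd_add (dvd_add ?_ ?_) ?_) ?_ <;>
      exact dvd_pow_self _ (pow_ne_zero _ hq0)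
  · have heq : (X : k[X]) ^ q ^ 7 + X =
        (X ^ q ^ 3 + X ^ q ^ 2 + X) ^ q ^ 4 + (X ^ q ^ 3 + X ^ q ^ 2 + X) ^ q ^ 3
          + (X ^ q ^ 3 + X ^ q ^ 2 + X) ^ q ^ 2 + (X ^ q ^ 3 + X ^ q ^ 2 + X) ^ q ^ 0 := by
      rw [hL, hL, hL, hL]
      norm_num
      have : (X : k[X]) ^ q ^ 7 + X ^ q ^ 6 + X ^ q ^ 4 + (X ^ q ^ 6 + X ^ q ^ 5 + X ^ q ^ 3)
          + (X ^ q ^ 5 + X ^ q ^ 4 + X ^ q ^ 2) + (X ^ q ^ 3 + X ^ q ^ 2 + X)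
          = (X ^ q ^ 7 + X)
            + 2 * (X ^ q ^ 6 + X ^ q ^ 5 + X ^ q ^ 4 + X ^ q ^ 3 + X ^ q ^ 2) := by ring
      rw [this, h2, zero_mul, add_zero]
    rw [heq]
    refine dvd_add (dvd_add (dvd_add ?_ ?_) ?_) ?_ <;>
      exact dvd_pow_self _ (pow_ne_zero _ hq0)
end

section
/- Let $q = 2^m$ and $k = \mathbb{F}_q$. Every monic irreducible factor of the polynomial $X^{q^3} + X^q + X$ in $k[X]$ other than $X$ has degree exactly $7$; similarly every monic irreducible factor of $X^{q^3} + X^{q^2} + X$ other than $X$ has degree exactly $7$. -/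
open Polynomial

private lemma pow_gcd_fix {K : Type*} [Monoid K] (α : K) (Q : ℕ) :
    ∀ a b : ℕ, α ^ Q ^ a = α → α ^ Q ^ b = α → α ^ Q ^ Nat.gcd a b = α := by
  have hmod : ∀ a b : ℕ, α ^ Q ^ a = α → α ^ Q ^ b = α → α ^ Q ^ (b % a) = α := by
    intro a b ha hb
    have key : ∀ t : ℕ, α ^ Q ^ (b % a + a * t) = α ^ Q ^ (b % a) := by
      intro t
      induction t with
      | zero => simp
      | succ t ih =>
        have h1 : b % a + a * (t + 1) = (b % a + a * t) + a := by ring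
        rw [h1, pow_add, pow_mul, ih, ← pow_mul, mul_comm (Q ^ (b % a)), pow_mul, ha]
    have h2 : b % a + a * (b / a) = b := by
      rw [add_comm]; exact Nat.div_add_mod b a
    rw [← key (b / a), h2, hb]
  intro a b
  induction a, b using Nat.gcd.induction with
  | H0 b => simpa using fun h => h
  | H1 a b _ ih =>
    intro ha hb
    rw [Nat.gcd_rec]
    exact ih (hmod a b ha hb) ha

private lemma fix7_1 {K : Type*} [CommRing K] (htwo : (2 : K) = 0) (q : ℕ)
    (F : ∀ x y : K, (x + y) ^ q = x ^ q + y ^ q) (α : K)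
    (h : ((α ^ q) ^ q) ^ q = α ^ q + α) :
    ((((((α ^ q) ^ q) ^ q) ^ q) ^ q) ^ q) ^ q = α := by
  have h4 : (((α ^ q) ^ q) ^ q) ^ q = (α ^ q) ^ q + α ^ q := by
    conv_lhs => rw [h]
    rw [F]
  have h5 : ((((α ^ q) ^ q) ^ q) ^ q) ^ q = ((α ^ q) ^ q) ^ q + (α ^ q) ^ q := by
    conv_lhs => rw [h4]
    rw [F]
  have h6 : (((((α ^ q) ^ q) ^ q) ^ q) ^ q) ^ q
      = (((α ^ q) ^ q) ^ q) ^ q + ((α ^ q) ^ q) ^ q := by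
    conv_lhs => rw [h5]
    rw [F]
  have h7 : ((((((α ^ q) ^ q) ^ q) ^ q) ^ q) ^ q) ^ q
      = ((((α ^ q) ^ q) ^ q) ^ q) ^ q + (((α ^ q) ^ q) ^ q) ^ q := by
    conv_lhs => rw [h6]
    rw [F]
  linear_combination h7 + h5 + h4 + h + ((α ^ q) ^ q + α ^ q) * htwo

private lemma fix7_2 {K : Type*} [CommRing K] (htwo : (2 : K) = 0) (q : ℕ)
    (F : ∀ x y : K, (x + y) ^ q = x ^ q + y ^ q) (α : K)
    (h : ((α ^ q) ^ q) ^ q = (α ^ q) ^ q + α) :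
    ((((((α ^ q) ^ q) ^ q) ^ q) ^ q) ^ q) ^ q = α := by
  have h4 : (((α ^ q) ^ q) ^ q) ^ q = ((α ^ q) ^ q) ^ q + α ^ q := by
    conv_lhs => rw [h]
    rw [F]
  have h5 : ((((α ^ q) ^ q) ^ q) ^ q) ^ q = (((α ^ q) ^ q) ^ q) ^ q + (α ^ q) ^ q := by
    conv_lhs => rw [h4]
    rw [F]
  have h6 : (((((α ^ q) ^ q) ^ q) ^ q) ^ q) ^ q
      = ((((α ^ q) ^ q) ^ q) ^ q) ^ q + ((α ^ q) ^ q) ^ q := by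
    conv_lhs => rw [h5]
    rw [F]
  have h7 : ((((((α ^ q) ^ q) ^ q) ^ q) ^ q) ^ q) ^ q
      = (((((α ^ q) ^ q) ^ q) ^ q) ^ q) ^ q + (((α ^ q) ^ q) ^ q) ^ q := by
    conv_lhs => rw [h6]
    rw [F]
  linear_combination h7 + h6 + h5 + 2 * h4 + 3 * h + (2 * ((α ^ q) ^ q) + α ^ q + α) * htwo


private lemma deg7_aux (k : Type) [Field k] [Fintype k] (q m : ℕ) (hm : q = 2 ^ m)
    (hq : Fintype.card k = q) (p : k[X]) (hmon : p.Monic) (hirr : Irreducible p)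
    (hne : p ≠ X) (j : ℕ) (hj : j = 1 ∨ j = 2)
    (hdvd : p ∣ X ^ q ^ 3 + X ^ q ^ j + X) : p.natDegree = 7 := by
  haveI := Fact.mk hirr
  have hp0 : p ≠ 0 := hirr.ne_zero
  have hq2 : 2 ≤ q := hq ▸ Fintype.one_lt_card
  have hm0 : m ≠ 0 := by rintro rfl; omega
  -- characteristic 2
  have h2k : (2 : k) = 0 := by
    have h := FiniteField.cast_card_eq_zero k
    rw [hq, hm] at h
    push_cast at h
    exact (pow_eq_zero_iff hm0).mp h
  have hring : ringChar k = 2 := by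
    have hdvd2 : ringChar k ∣ 2 := (CharP.cast_eq_zero_iff k (ringChar k) 2).mp (by exact_mod_cast h2k)
    have h1 : ringChar k ≠ 1 := CharP.ringChar_ne_one
    have := Nat.le_of_dvd (by norm_num) hdvd2
    interval_cases h : ringChar k <;> omega
  haveI : CharP k 2 := hring ▸ ringChar.charP k
  haveI : Fact (Nat.Prime 2) := ⟨Nat.prime_two⟩
  set K := AdjoinRoot p with hK
  haveI : CharP K 2 := charP_of_injective_algebraMap (algebraMap k K).injective 2
  have htwo : (2 : K) = 0 := by exact_mod_cast CharP.cast_eq_zero K 2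
  set α : K := AdjoinRoot.root p with hα
  -- the basic relation
  have h0 : α ^ q ^ 3 + α ^ q ^ j + α = 0 := by
    have h := AdjoinRoot.mk_eq_zero.mpr hdvd
    rwa [map_add, map_add, map_pow, map_pow, AdjoinRoot.mk_X] at h
  -- α ≠ 0
  have hα0 : α ≠ 0 := by
    intro h
    apply hne
    have hdX : p ∣ X := AdjoinRoot.mk_eq_zero.mp (by rwa [AdjoinRoot.mk_X])
    exact eq_of_monic_of_associated hmon monic_X
      (hirr.associated_of_dvd irreducible_X hdX)
  -- Frobenius is additive
  have F : ∀ x y : K, (x + y) ^ q = x ^ q + y ^ q := by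
    intro x y; rw [hm]; exact add_pow_char_pow x y 2 m
  -- conversion lemmas for iterated powers
  have e3 : ∀ x : K, x ^ q ^ 3 = ((x ^ q) ^ q) ^ q := fun x => by
    rw [show q ^ 3 = q * q * q by ring, pow_mul, pow_mul]
  have e2 : ∀ x : K, x ^ q ^ 2 = (x ^ q) ^ q := fun x => by
    rw [show q ^ 2 = q * q by ring, pow_mul]
  have e7 : ∀ x : K, x ^ q ^ 7 = ((((((x ^ q) ^ q) ^ q) ^ q) ^ q) ^ q) ^ q := fun x => by
    rw [show q ^ 7 = q * q * q * q * q * q * q by ring, pow_mul, pow_mul, pow_mul,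
      pow_mul, pow_mul, pow_mul]
  have key : (((((((α ^ q) ^ q) ^ q) ^ q) ^ q) ^ q) ^ q = α) ∧ (α ^ q = α → False) := by
    rcases hj with rfl | rfl
    · have h3 : ((α ^ q) ^ q) ^ q = α ^ q + α := by
        rw [pow_one] at h0
        rw [← e3]
        linear_combination h0 - (α ^ q + α) * htwo
      refine ⟨fix7_1 htwo q F α h3, fun he => hα0 ?_⟩
      have hee : α ^ q ^ 3 = α := by rw [e3, he, he, he]
      rw [pow_one, hee, he] at h0
      linear_combination h0 - α * htwo
    · have h3 : ((α ^ q) ^ q) ^ q = (α ^ q) ^ q + α := by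
        rw [e2] at h0
        rw [← e3]
        linear_combination h0 - ((α ^ q) ^ q + α) * htwo
      refine ⟨fix7_2 htwo q F α h3, fun he => hα0 ?_⟩
      have hee : α ^ q ^ 3 = α := by rw [e3, he, he, he]
      have hee2 : α ^ q ^ 2 = α := by rw [e2, he, he]
      rw [hee, hee2] at h0
      linear_combination h0 - α * htwo
  have hfix : α ^ q ^ 7 = α := by rw [e7]; exact key.1
  -- finite field structure on K
  let pb := AdjoinRoot.powerBasis hp0
  haveI : Module.Finite k K := Module.Finite.of_basis pb.basis
  letI : Fintype K := Module.fintypeOfFintype pb.basis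
  have hcard : Fintype.card K = q ^ p.natDegree := by
    rw [Module.card_fintype pb.basis, hq]
    congr 1
    simp [pb, AdjoinRoot.powerBasis]
  set d := p.natDegree with hd
  have hdpos : 0 < d := hirr.natDegree_pos
  -- α is fixed by q^d power (Frobenius of K)
  have hαd : α ^ q ^ d = α := by
    rw [← hcard]; exact FiniteField.pow_card α
  -- gcd argument: 7 ∣ d
  have hgcd : α ^ q ^ Nat.gcd 7 d = α := pow_gcd_fix α q 7 d hfix hαd
  have h7d : 7 ∣ d := by
    rcases ((by norm_num : Nat.Prime 7).eq_one_or_self_of_dvd _ (Nat.gcd_dvd_left 7 d)) with h | h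
    · exfalso
      rw [h, pow_one] at hgcd
      exact key.2 hgcd
    · rw [← h]; exact Nat.gcd_dvd_right 7 d
  -- every element of K satisfies x ^ q ^ 7 = x
  have hc : ∀ c : k, c ^ q ^ 7 = c := fun c => by
    rw [← hq]; exact FiniteField.pow_card_pow 7 c
  have hiter : ∀ x : K, iterateFrobenius K 2 (m * 7) x = x ^ q ^ 7 := fun x => by
    rw [iterateFrobenius_def, hm, ← pow_mul]
  have hall : ∀ x : K, x ^ q ^ 7 = x := by
    let ψ : K →ₐ[k] K :=
      { toRingHom := iterateFrobenius K 2 (m * 7)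
        commutes' := fun c => by
          show iterateFrobenius K 2 (m * 7) ((algebraMap k K) c) = (algebraMap k K) c
          rw [hiter, ← map_pow, hc] }
    have hψ : ψ = AlgHom.id k K := by
      apply AdjoinRoot.algHom_ext
      show iterateFrobenius K 2 (m * 7) (AdjoinRoot.root p) = AdjoinRoot.root p
      rw [hiter]; exact hfix
    intro x
    have h := congrArg (fun f : K →ₐ[k] K => f x) hψ
    simp only [AlgHom.id_apply] at h
    rw [← hiter x]
    exact h
  -- cardinality bound: d ≤ 7
  have hne2 : (X ^ q ^ 7 - X : K[X]) ≠ 0 :=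
    FiniteField.X_pow_card_pow_sub_X_ne_zero K (by norm_num) (by omega)
  have hsub : (Finset.univ : Finset K) ⊆ (X ^ q ^ 7 - X : K[X]).roots.toFinset := by
    intro x _
    rw [Multiset.mem_toFinset, mem_roots hne2]
    simp [hall x, sub_eq_zero]
  have hcardle : Fintype.card K ≤ q ^ 7 := by
    calc Fintype.card K = (Finset.univ : Finset K).card := rfl
      _ ≤ (X ^ q ^ 7 - X : K[X]).roots.toFinset.card := Finset.card_le_card hsub
      _ ≤ Multiset.card (X ^ q ^ 7 - X : K[X]).roots := Multiset.toFinset_card_le _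
      _ ≤ (X ^ q ^ 7 - X : K[X]).natDegree := Polynomial.card_roots' _
      _ = q ^ 7 := FiniteField.X_pow_card_pow_sub_X_natDegree_eq K (by norm_num) (by omega)
  have hdle : d ≤ 7 := by
    rw [hcard] at hcardle
    exact (pow_le_pow_iff_right₀ (by omega : 1 < q)).mp hcardle
  exact Nat.le_antisymm hdle (Nat.le_of_dvd hdpos h7d)


/-- Let `q = 2^m` and `k = 𝔽_q`. Every monic irreducible factor of
`X^{q³} + X^q + X` in `k[X]` other than `X` has degree exactly 7, and the same
holds for `X^{q³} + X^{q²} + X`. -/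
theorem stmt_13 (k : Type) [Field k] [Fintype k] (q m : ℕ) (hm : q = 2 ^ m)
    (hq : Fintype.card k = q) :
    ∀ p : k[X], p.Monic → Irreducible p → p ≠ X →
      ((p ∣ X ^ q ^ 3 + X ^ q + X → p.natDegree = 7) ∧
       (p ∣ X ^ q ^ 3 + X ^ q ^ 2 + X → p.natDegree = 7)) := by
  intro p hmon hirr hne
  constructor
  · intro hdvd
    exact deg7_aux k q m hm hq p hmon hirr hne 1 (Or.inl rfl) (by rwa [pow_one])
  · intro hdvd
    exact deg7_aux k q m hm hq p hmon hirr hne 2 (Or.inr rfl) hdvd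
end

section
/- Let $q = 2^m$ and $k = \mathbb{F}_q$. The number of monic irreducible polynomials of degree $7$ in $k[X]$ that divide $X^{q^3} + X^q + X$ equals $(q^3 - 1)/7$, and the same holds for $X^{q^3} + X^{q^2} + X$. -/
open Polynomial


lemma aux_pow_sub_one_dvd {a d n : ℕ} (ha : 2 ≤ a) (hd : d ≠ 0)
    (h : a ^ d - 1 ∣ a ^ n - 1) : d ∣ n := by
  have hpos : ∀ s : ℕ, 1 ≤ a ^ s := fun s => Nat.one_le_pow _ _ (by omega)
  have h1 : (1 : ℕ) ≡ a ^ d [MOD a ^ d - 1] := (Nat.modEq_iff_dvd' (hpos d)).2 dvd_rfl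
  have h2 : a ^ n ≡ a ^ (n % d) [MOD a ^ d - 1] := by
    conv_lhs => rw [← Nat.div_add_mod n d]
    rw [pow_add, pow_mul]
    calc ((a ^ d) ^ (n / d)) * a ^ (n % d)
        ≡ 1 ^ (n / d) * a ^ (n % d) [MOD a ^ d - 1] :=
          Nat.ModEq.mul_right _ ((h1.symm).pow _)
      _ = a ^ (n % d) := by ring
  have h3 : (1 : ℕ) ≡ a ^ n [MOD a ^ d - 1] := (Nat.modEq_iff_dvd' (hpos n)).2 h
  have h4 : (1 : ℕ) ≡ a ^ (n % d) [MOD a ^ d - 1] := h3.trans h2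
  have h5 : a ^ d - 1 ∣ a ^ (n % d) - 1 := (Nat.modEq_iff_dvd' (hpos _)).1 h4
  have hlt : a ^ (n % d) < a ^ d := by
    have h0 : 0 < d := Nat.pos_of_ne_zero hd
    exact Nat.pow_lt_pow_right (by omega) (Nat.mod_lt n h0)
  have h7 : a ^ (n % d) - 1 = 0 := Nat.eq_zero_of_dvd_of_lt h5 (Nat.sub_lt_sub_right (hpos _) hlt)
  have h8 : n % d = 0 := by
    by_contra hc
    have h9 := Nat.one_lt_pow hc (show 1 < a from ha)
    have h10 := Nat.sub_eq_zero_iff_le.mp h7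
    exact absurd h10 (Nat.not_le.mpr h9)
  exact Nat.dvd_of_mod_eq_zero h8



lemma aux_deg_dvd (k : Type) [Field k] [Fintype k] [CharP k 2] (q m n : ℕ) (hm : q = 2 ^ m)
    (hq : Fintype.card k = q) {p : k[X]} (hirr : Irreducible p)
    (hdvd : p ∣ X ^ q ^ n - X) : p.natDegree ∣ n := by
  haveI := Fact.mk hirr
  have hq2 : 2 ≤ q := by rw [← hq]; exact Fintype.one_lt_card
  set K := AdjoinRoot p with hK
  haveI : CharP K 2 := charP_of_injective_algebraMap (algebraMap k K).injective 2
  let pb : PowerBasis k K := AdjoinRoot.powerBasis hirr.ne_zero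
  haveI : FiniteDimensional k K := pb.finite
  haveI : Finite K := Module.finite_of_finite k
  letI : Fintype K := Fintype.ofFinite K
  have hcard : Fintype.card K = q ^ p.natDegree := by
    rw [Module.card_fintype pb.basis, hq, Fintype.card_fin]
    rw [show pb.dim = p.natDegree from AdjoinRoot.powerBasis_dim hirr.ne_zero]
  have hroot : (AdjoinRoot.root p) ^ q ^ n = AdjoinRoot.root p := by
    have h0 : aeval (AdjoinRoot.root p) (X ^ q ^ n - X : k[X]) = 0 := by
      rw [AdjoinRoot.aeval_eq, AdjoinRoot.mk_eq_zero]; exact hdvd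
    rw [map_sub, map_pow, aeval_X, sub_eq_zero] at h0
    exact h0
  have hall : ∀ x : K, x ^ q ^ n = x := by
    have hqn : q ^ n = 2 ^ (m * n) := by rw [hm, ← pow_mul]
    let ψ : K →+* K := iterateFrobenius K 2 (m * n)
    have hψ : ∀ x : K, ψ x = x ^ q ^ n := fun x => by
      show iterateFrobenius K 2 (m * n) x = _
      rw [iterateFrobenius_def, ← hqn]
    have hcomp : ψ.comp (AdjoinRoot.mk p) = (AdjoinRoot.mk p : k[X] →+* K) := by
      apply Polynomial.ringHom_ext
      · intro a
        have ha : a ^ q ^ n = a := by rw [← hq]; exact FiniteField.pow_card_pow _ _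
        simp only [RingHom.comp_apply, hψ]
        rw [← map_pow]
        congr 1
        rw [← map_pow, ha]
      · simp only [RingHom.comp_apply, hψ]
        rw [AdjoinRoot.mk_X]
        exact hroot
    intro x
    obtain ⟨g, rfl⟩ := AdjoinRoot.mk_surjective x
    calc (AdjoinRoot.mk p g) ^ q ^ n = ψ (AdjoinRoot.mk p g) := (hψ _).symm
      _ = AdjoinRoot.mk p g := by rw [← RingHom.comp_apply, hcomp]
  obtain ⟨g, hg⟩ := IsCyclic.exists_generator (α := Kˣ)
  have horder : orderOf g = Fintype.card K - 1 := by
    rw [orderOf_eq_card_of_forall_mem_zpowers hg, Nat.card_eq_fintype_card, Fintype.card_units]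
  have hq1 : 1 ≤ q ^ n := Nat.one_le_pow _ _ (by omega)
  have hg1 : g ^ (q ^ n - 1) = 1 := by
    have hx : (g : K) ^ q ^ n = g := hall g
    have hgne : (g : K) ≠ 0 := Units.ne_zero g
    have : (g : K) ^ (q ^ n - 1) * g = (g:K) := by
      rw [← pow_succ, Nat.sub_add_cancel hq1]; exact hx
    have h2 : (g : K) ^ (q ^ n - 1) = 1 :=
      mul_right_cancel₀ hgne (this.trans (one_mul (g : K)).symm)
    ext
    push_cast
    exact h2
  have hdvd2 : q ^ p.natDegree - 1 ∣ q ^ n - 1 := by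
    rw [← hcard, ← horder]; exact orderOf_dvd_of_pow_eq_one hg1
  exact aux_pow_sub_one_dvd hq2 hirr.natDegree_pos.ne' hdvd2


lemma aux_count (k : Type) [Field k] [Fintype k] (q : ℕ) (hq : Fintype.card k = q)
    (f : k[X]) (hmonic : f.Monic) (hdeg : f.natDegree = q ^ 3)
    (hsep : f.Separable) (hX : X ∣ f)
    (hdeg7 : ∀ p : k[X], p.Monic → Irreducible p → p ∣ f → p ≠ X → p.natDegree = 7) :
    (7 : ℤ) * Nat.card {p : k[X] // p.Monic ∧ Irreducible p ∧ p.natDegree = 7 ∧ p ∣ f}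
      = (q : ℤ) ^ 3 - 1 := by
  classical
  have hf0 : f ≠ 0 := hmonic.ne_zero
  set N := UniqueFactorizationMonoid.normalizedFactors f with hN
  have hnodup : N.Nodup :=
    (UniqueFactorizationMonoid.squarefree_iff_nodup_normalizedFactors hf0).1 hsep.squarefree
  have hmem : ∀ p : k[X], p ∈ N ↔ p.Monic ∧ Irreducible p ∧ p ∣ f := by
    intro p
    constructor
    · intro hp
      have h1 := UniqueFactorizationMonoid.irreducible_of_normalized_factor p hp
      have h2 := UniqueFactorizationMonoid.normalize_normalized_factor p hp
      refine ⟨?_, h1, UniqueFactorizationMonoid.dvd_of_mem_normalizedFactors hp⟩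
      rw [← h2]; exact Polynomial.monic_normalize h1.ne_zero
    · rintro ⟨hpm, hpi, hpd⟩
      obtain ⟨r, hr, hassoc⟩ :=
        UniqueFactorizationMonoid.exists_mem_normalizedFactors_of_dvd hf0 hpi hpd
      have hrm : r.Monic := by
        have h2 := UniqueFactorizationMonoid.normalize_normalized_factor r hr
        rw [← h2]
        exact Polynomial.monic_normalize
          (UniqueFactorizationMonoid.irreducible_of_normalized_factor r hr).ne_zero
      rwa [Polynomial.eq_of_monic_of_associated hpm hrm hassoc]
  have hallmonic : ∀ g ∈ N, Polynomial.Monic g := fun g hg => ((hmem g).1 hg).1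
  have hprodmonic : N.prod.Monic := by
    have := Polynomial.monic_multiset_prod_of_monic N id hallmonic
    simpa using this
  have hprod : N.prod = f :=
    Polynomial.eq_of_monic_of_associated hprodmonic hmonic
      (UniqueFactorizationMonoid.prod_normalizedFactors hf0)
  have hdegsum : (N.map Polynomial.natDegree).sum = q ^ 3 := by
    rw [← Polynomial.natDegree_multiset_prod_of_monic _ hallmonic, hprod, hdeg]
  have hval : N.toFinset.val = N := by rw [Multiset.toFinset_val, hnodup.dedup]
  have hsum : ∑ p ∈ N.toFinset, p.natDegree = q ^ 3 := by
    calc ∑ p ∈ N.toFinset, p.natDegree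
        = (Multiset.map Polynomial.natDegree N.toFinset.val).sum := rfl
      _ = q ^ 3 := by rw [hval, hdegsum]
  set T := N.toFinset.erase X with hT
  have hXN : X ∈ N.toFinset := by
    rw [Multiset.mem_toFinset, hmem]; exact ⟨monic_X, irreducible_X, hX⟩
  have hT7 : ∀ p ∈ T, p.natDegree = 7 := by
    intro p hp
    have hpN := Finset.mem_of_mem_erase hp
    rw [Multiset.mem_toFinset, hmem] at hpN
    exact hdeg7 p hpN.1 hpN.2.1 hpN.2.2 (Finset.ne_of_mem_erase hp)
  have hcount : q ^ 3 = 1 + 7 * T.card := by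
    have h1 : X.natDegree + ∑ p ∈ T, p.natDegree = ∑ p ∈ N.toFinset, p.natDegree :=
      Finset.add_sum_erase _ _ hXN
    have h2 : ∑ p ∈ T, p.natDegree = 7 * T.card := by
      rw [Finset.sum_congr rfl hT7, Finset.sum_const, smul_eq_mul, mul_comm]
    rw [hsum, h2, Polynomial.natDegree_X] at h1
    omega
  have hNatCard : Nat.card {p : k[X] // p.Monic ∧ Irreducible p ∧ p.natDegree = 7 ∧ p ∣ f}
      = T.card := by
    have hiff : ∀ p : k[X],
        (p.Monic ∧ Irreducible p ∧ p.natDegree = 7 ∧ p ∣ f) ↔ p ∈ T := by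
      intro p
      constructor
      · rintro ⟨h1, h2, h3, h4⟩
        refine Finset.mem_erase.2 ⟨?_, ?_⟩
        · intro hpx; rw [hpx, Polynomial.natDegree_X] at h3; exact absurd h3 (by norm_num)
        · rw [Multiset.mem_toFinset, hmem]; exact ⟨h1, h2, h4⟩
      · intro hp
        have hpN := Finset.mem_of_mem_erase hp
        rw [Multiset.mem_toFinset, hmem] at hpN
        exact ⟨hpN.1, hpN.2.1, hT7 p hp, hpN.2.2⟩
    rw [Nat.card_congr (Equiv.subtypeEquivRight hiff), Nat.card_eq_fintype_card,
      Fintype.card_coe]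
  rw [hNatCard]
  have : ((q : ℤ)) ^ 3 = 1 + 7 * (T.card : ℤ) := by exact_mod_cast congrArg Nat.cast hcount
  linarith

lemma aux_main (k : Type) [Field k] [Fintype k] [CharP k 2] (q m : ℕ) (hm : q = 2 ^ m)
    (hq : Fintype.card k = q) (f : k[X]) (hmonic : f.Monic) (hdeg : f.natDegree = q ^ 3)
    (hder : derivative f = 1) (hX : X ∣ f) (hdvd7 : f ∣ X ^ q ^ 7 - X)
    (hroot : ∀ c : k, f.eval c = 0 → c = 0) :
    (7 : ℤ) * Nat.card {p : k[X] // p.Monic ∧ Irreducible p ∧ p.natDegree = 7 ∧ p ∣ f}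
      = (q : ℤ) ^ 3 - 1 := by
  have hsep : f.Separable := by
    rw [Polynomial.separable_def, hder]; exact isCoprime_one_right
  apply aux_count k q hq f hmonic hdeg hsep hX
  intro p hpm hpi hpd hpx
  have hdvddeg : p.natDegree ∣ 7 := aux_deg_dvd k q m 7 hm hq hpi (hpd.trans hdvd7)
  have h7 : Nat.Prime 7 := by norm_num
  rcases (Nat.Prime.eq_one_or_self_of_dvd h7 _ hdvddeg) with h1 | h1
  · exfalso
    have hpc : p = X + C (p.coeff 0) := hpm.eq_X_add_C h1
    set c := p.coeff 0 with hc
    have hpe : p.eval c = 0 := by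
      rw [hpc]; simp [CharTwo.add_self_eq_zero]
    have hfe : f.eval c = 0 := by
      have := Polynomial.eval_dvd (x := c) hpd
      rw [hpe] at this
      exact zero_dvd_iff.mp this
    have hc0 : c = 0 := hroot c hfe
    rw [hpc, hc0] at hpx
    simp at hpx
  · exact h1

/-- Let `q = 2^m` and `k = 𝔽_q`. The number of monic irreducible polynomials of
degree 7 in `k[X]` dividing `X^{q³} + X^q + X` equals `(q³ - 1)/7`, and the
same holds for `X^{q³} + X^{q²} + X`. -/
theorem stmt_15 (k : Type) [Field k] [Fintype k] (q m : ℕ) (hm : q = 2 ^ m)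
    (hq : Fintype.card k = q) :
    (7 : ℤ) * Nat.card {p : k[X] // p.Monic ∧ Irreducible p ∧ p.natDegree = 7 ∧
        p ∣ X ^ q ^ 3 + X ^ q + X} = q ^ 3 - 1 ∧
    (7 : ℤ) * Nat.card {p : k[X] // p.Monic ∧ Irreducible p ∧ p.natDegree = 7 ∧
        p ∣ X ^ q ^ 3 + X ^ q ^ 2 + X} = q ^ 3 - 1 := by
  have hq2 : 2 ≤ q := by rw [← hq]; exact Fintype.one_lt_card
  have hm0 : m ≠ 0 := by rintro rfl; rw [hm] at hq2; norm_num at hq2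
  -- characteristic 2
  have h2k : (2 : k) = 0 := by
    have hcast : ((Fintype.card k : ℕ) : k) = 0 := FiniteField.cast_card_eq_zero k
    rw [hq, hm] at hcast
    push_cast at hcast
    exact pow_eq_zero_iff hm0 |>.mp hcast
  haveI : CharP k 2 := by
    have hdvd : ringChar k ∣ 2 := (ringChar.spec k 2).mp (by exact_mod_cast h2k)
    have hne1 : ringChar k ≠ 1 := CharP.ringChar_ne_one
    rcases (Nat.prime_two.eq_one_or_self_of_dvd _ hdvd) with h | h
    · exact absurd h hne1
    · exact h ▸ ringChar.charP k
  haveI : CharP k[X] 2 := inferInstance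
  have h2P : (2 : k[X]) = 0 := by exact_mod_cast CharP.cast_eq_zero k[X] 2
  have hqk : ((q : ℕ) : k) = 0 := by
    rw [hm]; push_cast; rw [pow_eq_zero_iff hm0]; exact_mod_cast h2k
  have hq30 : q ^ 3 ≠ 0 := by positivity
  have hq0 : q ≠ 0 := by omega
  -- generic facts
  have hdlt : ∀ a : ℕ, 0 < a → a < q ^ 3 → ((X ^ a + X : k[X])).degree < ((q ^ 3 : ℕ) : WithBot ℕ) := by
    intro a ha haq
    apply lt_of_le_of_lt (Polynomial.degree_add_le _ _)
    rw [Polynomial.degree_X_pow, Polynomial.degree_X]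
    have h1 : ((a : ℕ) : WithBot ℕ) < ((q ^ 3 : ℕ) : WithBot ℕ) := by exact_mod_cast haq
    have h2 : ((1 : ℕ) : WithBot ℕ) < ((q ^ 3 : ℕ) : WithBot ℕ) := by
      exact_mod_cast show 1 < q ^ 3 from Nat.one_lt_pow (by norm_num) (by omega)
    exact max_lt h1 (by exact_mod_cast h2)
  have hqlt : q < q ^ 3 := by
    calc q = q ^ 1 := (pow_one q).symm
      _ < q ^ 3 := Nat.pow_lt_pow_right (by omega) (by norm_num)
  have hq2lt : q ^ 2 < q ^ 3 := Nat.pow_lt_pow_right (by omega) (by norm_num)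
  have hpow : ∀ c : k, ∀ i : ℕ, c ^ q ^ i = c := by
    intro c i
    rw [← hq]
    exact FiniteField.pow_card_pow _ _
  have hpow1 : ∀ c : k, c ^ q = c := by
    intro c
    rw [← hq]
    exact FiniteField.pow_card c
  constructor
  · -- f₁ = X^{q³} + X^q + X
    set f : k[X] := X ^ q ^ 3 + X ^ q + X with hf
    have hass : f = X ^ q ^ 3 + (X ^ q + X) := by rw [hf, add_assoc]
    have hmonic : f.Monic := by
      rw [hass]; exact Polynomial.monic_X_pow_add (hdlt q (by omega) hqlt)
    have hdegf : f.natDegree = q ^ 3 := by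
      have hdeg : f.degree = ((q ^ 3 : ℕ) : WithBot ℕ) := by
        rw [hass]
        rw [Polynomial.degree_add_eq_left_of_degree_lt] <;>
          rw [Polynomial.degree_X_pow]
        exact hdlt q (by omega) hqlt
      exact Polynomial.natDegree_eq_of_degree_eq_some hdeg
    have hder : derivative f = 1 := by
      rw [hf]
      rw [derivative_add, derivative_add, derivative_X_pow, derivative_X_pow, derivative_X]
      have e1 : ((q ^ 3 : ℕ) : k) = 0 := by push_cast [hqk]; ring
      rw [e1, hqk]
      simp
    have hXf : X ∣ f := by
      rw [Polynomial.X_dvd_iff, hf]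
      have e1 : ¬ (0 = q ^ 3) := by omega
      have e2 : ¬ (0 = q) := by omega
      simp [Polynomial.coeff_X_pow, e1, e2]
    have hpowf : ∀ i : ℕ, f ^ q ^ i = X ^ q ^ (i + 3) + X ^ q ^ (i + 1) + X ^ q ^ i := by
      intro i
      have h2i : q ^ i = 2 ^ (m * i) := by rw [hm, ← pow_mul]
      rw [hf, h2i, add_pow_char_pow, add_pow_char_pow, ← pow_mul, ← pow_mul, ← h2i]
      have e1 : q ^ 3 * q ^ i = q ^ (i + 3) := by ring
      have e2 : q * q ^ i = q ^ (i + 1) := by ring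
      rw [e1, e2]
    have hdvd7 : f ∣ X ^ q ^ 7 - X := by
      have hsub : (X ^ q ^ 7 - X : k[X]) = X ^ q ^ 7 + X := by
        rw [CharTwo.sub_eq_add]
      have hsum : f ^ q ^ 4 + f ^ q ^ 2 + f ^ q ^ 1 + f = X ^ q ^ 7 + X := by
        rw [hpowf 4, hpowf 2, hpowf 1, hf]
        linear_combination (X ^ q ^ 5 + X ^ q ^ 4 + X ^ q ^ 3 + X ^ q ^ 2 + X ^ q : k[X]) * h2P
      rw [hsub, ← hsum]
      have hdf : ∀ j : ℕ, f ∣ f ^ q ^ j := fun j => dvd_pow dvd_rfl (by positivity)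
      exact dvd_add (dvd_add (dvd_add (hdf 4) (hdf 2)) (hdf 1)) dvd_rfl
    have hroot : ∀ c : k, f.eval c = 0 → c = 0 := by
      intro c hc
      rw [hf] at hc
      simp only [Polynomial.eval_add, Polynomial.eval_pow, Polynomial.eval_X] at hc
      rw [hpow c 3, hpow1 c] at hc
      rw [CharTwo.add_self_eq_zero, zero_add] at hc
      exact hc
    exact aux_main k q m hm hq f hmonic hdegf hder hXf hdvd7 hroot
  · -- f₂ = X^{q³} + X^{q²} + X
    set f : k[X] := X ^ q ^ 3 + X ^ q ^ 2 + X with hf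
    have hass : f = X ^ q ^ 3 + (X ^ q ^ 2 + X) := by rw [hf, add_assoc]
    have hmonic : f.Monic := by
      rw [hass]; exact Polynomial.monic_X_pow_add (hdlt (q ^ 2) (by positivity) hq2lt)
    have hdegf : f.natDegree = q ^ 3 := by
      have hdeg : f.degree = ((q ^ 3 : ℕ) : WithBot ℕ) := by
        rw [hass]
        rw [Polynomial.degree_add_eq_left_of_degree_lt] <;>
          rw [Polynomial.degree_X_pow]
        exact hdlt (q ^ 2) (by positivity) hq2lt
      exact Polynomial.natDegree_eq_of_degree_eq_some hdeg
    have hder : derivative f = 1 := by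
      rw [hf]
      rw [derivative_add, derivative_add, derivative_X_pow, derivative_X_pow, derivative_X]
      have e1 : ((q ^ 3 : ℕ) : k) = 0 := by push_cast [hqk]; ring
      have e2 : ((q ^ 2 : ℕ) : k) = 0 := by push_cast [hqk]; ring
      rw [e1, e2]
      simp
    have hXf : X ∣ f := by
      rw [Polynomial.X_dvd_iff, hf]
      have e1 : ¬ (0 = q ^ 3) := by omega
      have e2 : ¬ (0 = q ^ 2) := by
        have : q ^ 2 ≠ 0 := by positivity
        omega
      simp [Polynomial.coeff_X_pow, e1, e2]
    have hpowf : ∀ i : ℕ, f ^ q ^ i = X ^ q ^ (i + 3) + X ^ q ^ (i + 2) + X ^ q ^ i := by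
      intro i
      have h2i : q ^ i = 2 ^ (m * i) := by rw [hm, ← pow_mul]
      rw [hf, h2i, add_pow_char_pow, add_pow_char_pow, ← pow_mul, ← pow_mul, ← h2i]
      have e1 : q ^ 3 * q ^ i = q ^ (i + 3) := by ring
      have e2 : q ^ 2 * q ^ i = q ^ (i + 2) := by ring
      rw [e1, e2]
    have hdvd7 : f ∣ X ^ q ^ 7 - X := by
      have hsub : (X ^ q ^ 7 - X : k[X]) = X ^ q ^ 7 + X := by
        rw [CharTwo.sub_eq_add]
      have hsum : f ^ q ^ 4 + f ^ q ^ 3 + f ^ q ^ 2 + f = X ^ q ^ 7 + X := by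
        rw [hpowf 4, hpowf 3, hpowf 2, hf]
        linear_combination (X ^ q ^ 6 + X ^ q ^ 5 + X ^ q ^ 4 + X ^ q ^ 3 + X ^ q ^ 2 : k[X]) * h2P
      rw [hsub, ← hsum]
      have hdf : ∀ j : ℕ, f ∣ f ^ q ^ j := fun j => dvd_pow dvd_rfl (by positivity)
      exact dvd_add (dvd_add (dvd_add (hdf 4) (hdf 3)) (hdf 2)) dvd_rfl
    have hroot : ∀ c : k, f.eval c = 0 → c = 0 := by
      intro c hc
      rw [hf] at hc
      simp only [Polynomial.eval_add, Polynomial.eval_pow, Polynomial.eval_X] at hc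
      rw [hpow c 3, hpow c 2] at hc
      rw [CharTwo.add_self_eq_zero, zero_add] at hc
      exact hc
    exact aux_main k q m hm hq f hmonic hdegf hder hXf hdvd7 hroot
end

section
/- Let $k = \mathbb{F}_q$ be a finite field of characteristic $2$ with $q$ elements, and for $x \in k$ let $\sqrt{x}$ denote its unique square root in $k$. Let $X = \{(a,b,c,d,e,f) \in k^6 \mid a \neq 0,\ c \neq 0\}$, and for $t \in k^*$, $u \in k$ define $\gamma_{t,u}(a,b,c,d,e,f) = (a t^{-6},\ (b+eu+cu^2)t^2,\ c t^{10},\ (d+\sqrt{u}+fu)t^{-2},\ e t^6,\ f t^2)$. These maps send $X$ to itself, and the number of equivalence classes of $X$ under the relation generated by $Q \sim \gamma_{t,u}(Q)$ for all $t \in k^*, u \in k$ equals $q^4 - 2q^2 + q$. -/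
/-!
The maps `γ_{t,u}` form an action of the group `k* ⋉ k` (composition law
`(t,u)(s,w) = (ts, w + s⁴u)`, using that `√` is the inverse Frobenius, hence additive),
and we count orbits with Burnside's lemma. On `X`, `γ_{t,u}` can only fix a point if
`t⁶ = t¹⁰ = 1`, i.e. `t² = 1`, i.e. `t = 1`. The identity fixes all `(q-1)²q⁴` points of
`X`, and `γ_{1,u}` with `u ≠ 0` fixes exactly the `(q-1)²q²` points with `e = cu` and
`f = √u / u`. Hence the number of orbits is
`((q-1)²q⁴ + (q-1)·(q-1)²q²) / ((q-1)q) = q⁴ - 2q² + q`.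
-/

/-- The transformation `γ_{t,u}` on coefficient tuples `(a,b,c,d,e,f)`:
`γ_{t,u}(a,b,c,d,e,f) = (at⁻⁶, (b+eu+cu²)t², ct¹⁰, (d+√u+fu)t⁻², et⁶, ft²)`,
where `sqrt` is the square-root function of `k`. -/
def stmt18Gamma (k : Type) [Field k] (sqrt : k → k) (t u : k) (v : Fin 6 → k) :
    Fin 6 → k :=
  ![v 0 * t⁻¹ ^ 6, (v 1 + v 4 * u + v 2 * u ^ 2) * t ^ 2, v 2 * t ^ 10,
    (v 3 + sqrt u + v 5 * u) * t⁻¹ ^ 2, v 4 * t ^ 6, v 5 * t ^ 2]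

lemma eq_frobeniusEquiv_symm {R : Type*} [CommSemiring R] (p : ℕ) [ExpChar R p] [PerfectRing R p]
    {f : R → R} (hf : ∀ x, f x ^ p = x) : f = (frobeniusEquiv R p).symm :=
  funext fun x => (frobeniusEquiv R p).injective (by simp [frobenius_def, hf])

/-- `⟨t, u⟩` stands for `γ_{t,u}`. In characteristic 2 one has
`γ_{t,u} ∘ γ_{s,w} = γ_{ts, w + s⁴u}`, which dictates the multiplication. -/
@[ext]
structure GammaGroup (R : Type*) [CommRing R] where
  t : Rˣ
  u : R

namespace GammaGroup

variable {R : Type*} [CommRing R]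

instance : Mul (GammaGroup R) := ⟨fun g h => ⟨g.t * h.t, h.u + (h.t : R) ^ 4 * g.u⟩⟩
instance : One (GammaGroup R) := ⟨⟨1, 0⟩⟩
instance : Inv (GammaGroup R) := ⟨fun g => ⟨g.t⁻¹, -((g.t⁻¹ : Rˣ) : R) ^ 4 * g.u⟩⟩

@[simp] lemma mul_t (g h : GammaGroup R) : (g * h).t = g.t * h.t := rfl
@[simp] lemma mul_u (g h : GammaGroup R) : (g * h).u = h.u + (h.t : R) ^ 4 * g.u := rfl
@[simp] lemma one_t : (1 : GammaGroup R).t = 1 := rfl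
@[simp] lemma one_u : (1 : GammaGroup R).u = 0 := rfl
@[simp] lemma inv_t (g : GammaGroup R) : g⁻¹.t = g.t⁻¹ := rfl
@[simp] lemma inv_u (g : GammaGroup R) : g⁻¹.u = -((g.t⁻¹ : Rˣ) : R) ^ 4 * g.u := rfl

instance : Group (GammaGroup R) where
  mul_assoc a b c := by ext <;> simp [mul_assoc]; ring
  one_mul g := by ext <;> simp
  mul_one g := by ext <;> simp
  inv_mul_cancel g := by
    ext
    · simp
    · simp [← mul_assoc, ← mul_pow]

def equivProd : GammaGroup R ≃ Rˣ × R where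
  toFun g := (g.t, g.u)
  invFun p := ⟨p.1, p.2⟩

instance [Fintype R] [DecidableEq R] : Fintype (GammaGroup R) := .ofEquiv _ equivProd.symm

end GammaGroup

section Quartics

variable {k : Type} [Field k]

lemma stmt18Gamma_apply_zero_ne_zero {sqrt : k → k} {v : Fin 6 → k} (hv : v 0 ≠ 0) {t : k}
    (ht : t ≠ 0) (u : k) : stmt18Gamma k sqrt t u v 0 ≠ 0 := by
  simp [stmt18Gamma, hv, ht]

lemma stmt18Gamma_apply_two_ne_zero {sqrt : k → k} {v : Fin 6 → k} (hv : v 2 ≠ 0) {t : k}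
    (ht : t ≠ 0) (u : k) : stmt18Gamma k sqrt t u v 2 ≠ 0 := by
  simp [stmt18Gamma, hv, ht]

variable [CharP k 2] [PerfectRing k 2]

local notation "sqrt₂" => DFunLike.coe (RingEquiv.symm (frobeniusEquiv _ 2))

lemma frobeniusEquiv_symm_two_pow_four_mul (s x : k) : sqrt₂ (s ^ 4 * x) = s ^ 2 * sqrt₂ x := by
  rw [map_mul, show s ^ 4 = (s ^ 2) ^ 2 by ring, frobeniusEquiv_symm_pow]

lemma stmt18Gamma_one_zero (v : Fin 6 → k) : stmt18Gamma k sqrt₂ 1 0 v = v := by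
  ext i; fin_cases i <;> simp [stmt18Gamma]

lemma stmt18Gamma_mul {s t : k} (hs : s ≠ 0) (ht : t ≠ 0) (u w : k) (v : Fin 6 → k) :
    stmt18Gamma k sqrt₂ (t * s) (w + s ^ 4 * u) v
      = stmt18Gamma k sqrt₂ t u (stmt18Gamma k sqrt₂ s w v) := by
  ext i; fin_cases i <;> simp [stmt18Gamma, frobeniusEquiv_symm_two_pow_four_mul, CharTwo.add_sq] <;>
    field_simp <;> ring

namespace GammaGroup

noncomputable instance : MulAction (GammaGroup k) (Fin 6 → k) where
  smul g v := stmt18Gamma k sqrt₂ g.t g.u v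
  one_smul := stmt18Gamma_one_zero
  mul_smul g h := stmt18Gamma_mul h.t.ne_zero g.t.ne_zero g.u h.u

lemma smul_def (g : GammaGroup k) (v : Fin 6 → k) :
    g • v = stmt18Gamma k sqrt₂ g.t g.u v := rfl

variable (k) in
def quartics : SubMulAction (GammaGroup k) (Fin 6 → k) where
  carrier := {v | v 0 ≠ 0 ∧ v 2 ≠ 0}
  smul_mem' g _ hv :=
    ⟨stmt18Gamma_apply_zero_ne_zero hv.1 g.t.ne_zero _,
      stmt18Gamma_apply_two_ne_zero hv.2 g.t.ne_zero _⟩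

lemma exists_stmt18Gamma_eq_iff {x y : quartics k} :
    (∃ t u : k, t ≠ 0 ∧ stmt18Gamma k sqrt₂ t u x.1 = y.1)
      ↔ MulAction.orbitRel (GammaGroup k) _ x y := by
  rw [MulAction.orbitRel_apply, MulAction.mem_orbit_symm]
  constructor
  · rintro ⟨t, u, ht, h⟩
    exact ⟨⟨.mk0 t ht, u⟩, Subtype.ext h⟩
  · rintro ⟨g, h⟩
    exact ⟨g.t, g.u, g.t.ne_zero, congrArg Subtype.val h⟩

lemma eq_one_of_smul_eq_self {g : GammaGroup k} {v : Fin 6 → k} (hv : v ∈ quartics k)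
    (h : g • v = v) : g.t = 1 := by
  have h6 : (g.t : k) ^ 6 = 1 := by
    simpa [smul_def, stmt18Gamma, hv.1] using congrFun h 0
  have h10 : (g.t : k) ^ 10 = 1 := by
    simpa [smul_def, stmt18Gamma, hv.2] using congrFun h 2
  have h2 : (g.t : k) ^ 2 = 1 ^ 2 := by
    simpa using pow_gcd_eq_one.2 ⟨h6, h10⟩
  exact Units.val_eq_one.1 (frobenius_inj k 2 h2)

lemma smul_eq_self_iff {g : GammaGroup k} (ht : g.t = 1) (hu : g.u ≠ 0) {v : Fin 6 → k} :
    g • v = v ↔ v 4 = v 2 * g.u ∧ v 5 = sqrt₂ g.u / g.u := by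
  simp only [smul_def, stmt18Gamma, ht, Units.val_one, inv_one, one_pow, mul_one, funext_iff,
    Fin.forall_fin_succ, Matrix.cons_val_zero, Matrix.cons_val_succ, Fin.succ_zero_eq_one,
    Fin.succ_one_eq_two, Fin.reduceSucc, Matrix.cons_val_fin_one, IsEmpty.forall_iff, and_self,
    and_true, true_and]
  rw [add_assoc, add_eq_left, add_assoc, add_eq_left, CharTwo.add_eq_zero, CharTwo.add_eq_zero,
    sq, ← mul_assoc, mul_left_inj' hu, eq_div_iff hu, eq_comm (a := sqrt₂ g.u)]

def quarticsEquiv : quartics k ≃ kˣ × kˣ × k × k × k × k where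
  toFun v := (.mk0 (v.1 0) v.2.1, .mk0 (v.1 2) v.2.2, v.1 1, v.1 3, v.1 4, v.1 5)
  invFun p := ⟨![p.1, p.2.2.1, p.2.1, p.2.2.2.1, p.2.2.2.2.1, p.2.2.2.2.2],
    p.1.ne_zero, p.2.1.ne_zero⟩
  left_inv v := by ext i; fin_cases i <;> rfl

noncomputable def fixedByEquiv {g : GammaGroup k} (ht : g.t = 1) (hu : g.u ≠ 0) :
    MulAction.fixedBy (quartics k) g ≃ kˣ × kˣ × k × k where
  toFun v := (.mk0 (v.1.1 0) v.1.2.1, .mk0 (v.1.1 2) v.1.2.2, v.1.1 1, v.1.1 3)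
  invFun p := ⟨⟨![p.1, p.2.2.1, p.2.1, p.2.2.2, p.2.1 * g.u, sqrt₂ g.u / g.u],
    p.1.ne_zero, p.2.1.ne_zero⟩, Subtype.ext ((smul_eq_self_iff ht hu).2 ⟨rfl, rfl⟩)⟩
  left_inv v := by
    obtain ⟨he, hf⟩ := (smul_eq_self_iff ht hu).1 (congrArg Subtype.val v.2)
    ext i; fin_cases i
    exacts [rfl, rfl, rfl, rfl, he.symm, hf.symm]

lemma card_fixedBy_of_t_ne_one {g : GammaGroup k} (ht : g.t ≠ 1) :
    Nat.card (MulAction.fixedBy (quartics k) g) = 0 :=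
  Nat.card_eq_zero.2 <| .inl
    ⟨fun v => ht (eq_one_of_smul_eq_self v.1.2 (congrArg Subtype.val v.2))⟩

lemma card_fixedBy_of_u_ne_zero {g : GammaGroup k} (ht : g.t = 1) (hu : g.u ≠ 0) :
    Nat.card (MulAction.fixedBy (quartics k) g) = Nat.card kˣ ^ 2 * Nat.card k ^ 2 := by
  rw [Nat.card_congr (fixedByEquiv ht hu)]
  simp only [Nat.card_prod]
  ring

lemma card_quartics : Nat.card (quartics k) = Nat.card kˣ ^ 2 * Nat.card k ^ 4 := by
  rw [Nat.card_congr quarticsEquiv]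
  simp only [Nat.card_prod]
  ring

lemma sum_card_fixedBy [Fintype k] [DecidableEq k] :
    ∑ g : GammaGroup k, Nat.card (MulAction.fixedBy (quartics k) g)
      = Nat.card (quartics k) + Nat.card kˣ * (Nat.card kˣ ^ 2 * Nat.card k ^ 2) := by
  set F := fun g : GammaGroup k => Nat.card (MulAction.fixedBy (quartics k) g)
  calc ∑ g, F g = ∑ p : kˣ × k, F ⟨p.1, p.2⟩ :=
        Fintype.sum_equiv equivProd _ _ fun _ => rfl
    _ = ∑ t : kˣ, ∑ u : k, F ⟨t, u⟩ := Fintype.sum_prod_type _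
    _ = ∑ u : k, F ⟨1, u⟩ :=
      Fintype.sum_eq_single 1 fun t ht =>
        Finset.sum_eq_zero fun u _ => card_fixedBy_of_t_ne_one ht
    _ = F 1 + ∑ u ∈ {0}ᶜ, F ⟨1, u⟩ := Fintype.sum_eq_add_sum_compl 0 _
    _ = _ := by
      rw [Finset.sum_const_nat fun u hu =>
        card_fixedBy_of_u_ne_zero rfl (Finset.mem_compl.1 hu ∘ Finset.mem_singleton.2)]
      simp [F, Finset.card_compl, Fintype.card_units, Nat.card_eq_fintype_card]

lemma card_orbits [Finite k] :
    (Nat.card (Quotient (MulAction.orbitRel (GammaGroup k) (quartics k))) : ℤ)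
      = Nat.card k ^ 4 - 2 * Nat.card k ^ 2 + Nat.card k := by
  classical
  have := Fintype.ofFinite k
  have hB := MulAction.sum_card_fixedBy_eq_card_orbits_mul_card_group (GammaGroup k) (quartics k)
  simp only [← Nat.card_eq_fintype_card] at hB
  rw [sum_card_fixedBy, card_quartics, Nat.card_congr equivProd, Nat.card_prod,
    Nat.card_eq_card_units_add_one k] at hB
  rw [Nat.card_eq_card_units_add_one k]
  set n := Nat.card (Quotient (MulAction.orbitRel (GammaGroup k) (quartics k)))
  set m := Nat.card kˣ
  have hm : 0 < m := Nat.card_pos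
  have hn : n = m * (m + 1) ^ 3 + m ^ 2 * (m + 1) := by
    refine Nat.eq_of_mul_eq_mul_right (Nat.mul_pos hm (by positivity : 0 < m + 1)) ?_
    rw [← hB]
    ring
  rw [hn]
  push_cast
  ring

end GammaGroup

end Quartics

/-- Let `k = 𝔽_q` be a finite field of characteristic 2, with square-root
function `sqrt`. The maps `γ_{t,u}` (for `t ∈ k*`, `u ∈ k`) send
`X = {(a,…,f) ∈ k⁶ | a ≠ 0, c ≠ 0}` to itself, and the number of equivalence
classes of `X` under the relation generated by `Q ∼ γ_{t,u}(Q)` equals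
`q⁴ - 2q² + q`. -/
theorem stmt_18 (k : Type) [Field k] [Fintype k] [CharP k 2] (q : ℕ)
    (hq : Fintype.card k = q) (sqrt : k → k) (hsqrt : ∀ x : k, sqrt x ^ 2 = x) :
    (∀ v : Fin 6 → k, v 0 ≠ 0 → v 2 ≠ 0 → ∀ t u : k, t ≠ 0 →
        stmt18Gamma k sqrt t u v 0 ≠ 0 ∧ stmt18Gamma k sqrt t u v 2 ≠ 0) ∧
    (Nat.card (Quot fun (x y : {v : Fin 6 → k // v 0 ≠ 0 ∧ v 2 ≠ 0}) =>
        ∃ t u : k, t ≠ 0 ∧ stmt18Gamma k sqrt t u x.1 = y.1) : ℤ)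
      = q ^ 4 - 2 * q ^ 2 + q := by
  refine ⟨fun v h0 h2 t u ht =>
    ⟨stmt18Gamma_apply_zero_ne_zero h0 ht u, stmt18Gamma_apply_two_ne_zero h2 ht u⟩, ?_⟩
  obtain rfl := eq_frobeniusEquiv_symm 2 hsqrt
  rw [← hq, ← Nat.card_eq_fintype_card, ← GammaGroup.card_orbits]
  exact congrArg Nat.cast <| Nat.card_congr <|
    Quot.congrRight fun _ _ => GammaGroup.exists_stmt18Gamma_eq_iff
end
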